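/- arXiv:1705.01894 — 3 statements merged into one kernel-verified Lean document; each statement's English description precedes it below -/
import Mathlib

section
/- Let n ∈ ℕ₀, let V ∈ W^{n+1,2}_loc(ℝ) be complex-valued, let ψ'_{-1},…,ψ'_{n-1} be determined by the recursive system and let r_n be the associated remainder. Then there exist functions T_l^{n+1+k,n} of type T such that pointwise |r_n| ≲ |V^{(n+1)}|/|λ-V|^{(n+1)/2} + Σ_{k=0}^{n-1} (1/|λ-V|^{(n-1+k)/2}) Σ_{l=2}^{n+1+k} |T_l^{n+1+k,n}|/|λ-V|^l, with an implicit constant independent of λ and x. -/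
open Complex Filter Asymptotics MeasureTheory Real Set intervalIntegral
open scoped Classical ENNReal Topology

noncomputable section

/-- The Japanese bracket `⟨x⟩ = √(1+x²)`. -/
def jb (x : ℝ) : ℝ := Real.sqrt (1 + x ^ 2)

/-- `V` is bounded along the filter `l` (negation: `V` is unbounded at `±∞`). -/
def BoundedAt (V : ℝ → ℂ) (l : Filter ℝ) : Prop :=
  ∃ C : ℝ, ∀ᶠ x in l, ‖V x‖ ≤ C

/-- `f` is a function of type `T_j^{r,s}` built from the derivatives of `V`:
a finite linear combination `Σ_α c_α (V')^{α₁}(V'')^{α₂}⋯(V^{(s)})^{α_s}` over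
multi-indices `α ∈ I_j^{r,s}`, i.e. with `Σ i·α_i = r` and `Σ α_i = j`. -/
def IsTType (V : ℝ → ℂ) (j r s : ℕ) (f : ℝ → ℂ) : Prop :=
  ∃ (A : Finset (Fin s → ℕ)) (c : (Fin s → ℕ) → ℂ),
    (∀ α ∈ A, (∑ i : Fin s, ((i : ℕ) + 1) * α i) = r ∧ (∑ i : Fin s, α i) = j) ∧
    ∀ x : ℝ, f x = ∑ α ∈ A, c α * ∏ i : Fin s, (iteratedDeriv ((i : ℕ) + 1) V x) ^ (α i)

/-- The recursive JWKB system determining the functions `ψ_k'`; here `psi k`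
plays the role of `ψ_k'`, with the convention `ψ_α' = 0` for `α ≥ n` or `α ≤ -2`,
`ψ_{-1}' = i λ^{-1/2}(λ - V)^{1/2}` (principal branch), and, for `-1 ≤ k ≤ n-2`,
`ψ_{k+1}' = (1/(2ψ_{-1}'))(ψ_k'' - Σ_{α+β=k, α,β≠-1} ψ_α'ψ_β')`. -/
def PsiSystem (n : ℕ) (V : ℝ → ℂ) (lam : ℂ) (psi : ℤ → ℝ → ℂ) : Prop :=
  (∀ k : ℤ, ((n : ℤ) ≤ k ∨ k ≤ -2) → psi k = 0) ∧
  (∀ x : ℝ, psi (-1) x = Complex.I * lam ^ (-(1 / 2) : ℂ) * (lam - V x) ^ ((1 / 2) : ℂ)) ∧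
  (∀ k : ℤ, -1 ≤ k → k ≤ (n : ℤ) - 2 → ∀ x : ℝ,
    psi (k + 1) x = 1 / (2 * psi (-1) x) *
      (deriv (psi k) x - ∑ a ∈ Finset.Icc (0 : ℤ) k, psi a x * psi (k - a) x))

/-- The remainder `r_n = Σ_{k=n-1}^{2(n-1)} λ^{-k/2} φ_{k+1}`, where
`φ_{k+1} = ψ_k'' - Σ_{α+β=k} ψ_α'ψ_β'` (for `n = 0` the sum degenerates to the
single term `k = -1`). -/
def remainder (n : ℕ) (lam : ℂ) (psi : ℤ → ℝ → ℂ) (x : ℝ) : ℂ :=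
  ∑ k ∈ Finset.Icc ((n : ℤ) - 1) (max ((n : ℤ) - 1) (2 * ((n : ℤ) - 1))),
    lam ^ (-(k : ℂ) / 2) *
      (deriv (psi k) x - ∑ a ∈ Finset.Icc (-1 : ℤ) (k + 1), psi a x * psi (k - a) x)

/-- Assumption A of the paper: regularity `W^{N,∞}_loc` (modelled by `ContDiff ℝ N`),
different asymptotic behaviour of `Im V` at `±∞`, control of the derivatives of `V`
by `V`, and largeness of `Im V`. -/
structure AssumptionA (N : ℕ) (V : ℝ → ℂ) (nuM nuP eps1 eps2 : ℝ) : Prop where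
  N_pos : 1 ≤ N
  smooth : ContDiff ℝ N V
  im_limsup : Filter.limsup (fun x => (V x).im) Filter.atBot < 0
  im_liminf : 0 < Filter.liminf (fun x => (V x).im) Filter.atTop
  derIm_p : ∀ m : ℕ, 1 ≤ m → m ≤ N →
    (fun x => (iteratedDeriv m V x).im) =O[atTop]
      (fun x => |(V x).im| * jb x ^ ((m : ℝ) * nuP))
  derIm_m : ∀ m : ℕ, 1 ≤ m → m ≤ N →
    (fun x => (iteratedDeriv m V x).im) =O[atBot]
      (fun x => |(V x).im| * jb x ^ ((m : ℝ) * nuM))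
  der_p : ∀ m : ℕ, 1 ≤ m → m ≤ N →
    (fun x => iteratedDeriv m V x) =O[atTop]
      (fun x => ‖V x‖ * jb x ^ ((m : ℝ) * nuP))
  der_m : ∀ m : ℕ, 1 ≤ m → m ≤ N →
    (fun x => iteratedDeriv m V x) =O[atBot]
      (fun x => ‖V x‖ * jb x ^ ((m : ℝ) * nuM))
  eps1_pos : 0 < eps1
  big_p : ¬ BoundedAt V atTop →
    (fun x => jb x ^ (4 * (nuP + eps1) + 2) * (jb x ^ (4 * nuP + 2) + |(V x).re|))
      =O[atTop] (fun x => ((V x).im) ^ 2)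
  big_m : ¬ BoundedAt V atBot →
    (fun x => jb x ^ (4 * (nuM + eps1) + 2) * (jb x ^ (4 * nuM + 2) + |(V x).re|))
      =O[atBot] (fun x => ((V x).im) ^ 2)
  bdd_p : BoundedAt V atTop → nuP < 1
  bdd_m : BoundedAt V atBot → nuM < 1
  eps2_pos : 0 < eps2
  eps2_p : BoundedAt V atTop → eps2 < 1 - nuP
  eps2_m : BoundedAt V atBot → eps2 < 1 - nuM

/-- The set whose infimum defines `δ_+` in the unbounded case. -/
def deltaSetP (V : ℝ → ℂ) (nuP eps1 : ℝ) (lam : ℝ) : Set ℝ :=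
  {d : ℝ | 0 ≤ d ∧ ((V d).im) ^ 2 / jb d ^ (4 * nuP + 2 * eps1 + 2) = lam}

/-- The set whose infimum defines `δ_-` in the unbounded case. -/
def deltaSetM (V : ℝ → ℂ) (nuM eps1 : ℝ) (lam : ℝ) : Set ℝ :=
  {d : ℝ | 0 ≤ d ∧ ((V (-d)).im) ^ 2 / jb d ^ (4 * nuM + 2 * eps1 + 2) = lam}

/-- The cut-off radius `δ_+`. -/
def deltaP (V : ℝ → ℂ) (nuP eps1 eps2 : ℝ) (lam : ℝ) : ℝ :=
  if BoundedAt V atTop then lam ^ ((1 + eps2) / 2) else sInf (deltaSetP V nuP eps1 lam)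

/-- The cut-off radius `δ_-`. -/
def deltaM (V : ℝ → ℂ) (nuM eps1 eps2 : ℝ) (lam : ℝ) : ℝ :=
  if BoundedAt V atBot then lam ^ ((1 + eps2) / 2) else sInf (deltaSetM V nuM eps1 lam)

/-- The transition-layer width `Δ_+`. -/
def DeltaP (V : ℝ → ℂ) (nuP eps1 eps2 : ℝ) (lam : ℝ) : ℝ :=
  if BoundedAt V atTop then deltaP V nuP eps1 eps2 lam / 4
  else (deltaP V nuP eps1 eps2 lam) ^ (-nuP) / 4

/-- The transition-layer width `Δ_-`. -/
def DeltaM (V : ℝ → ℂ) (nuM eps1 eps2 : ℝ) (lam : ℝ) : ℝ :=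
  if BoundedAt V atBot then deltaM V nuM eps1 eps2 lam / 4
  else (deltaM V nuM eps1 eps2 lam) ^ (-nuM) / 4

/-- The cut-off function `ξ`: smooth, compactly supported, `0 ≤ ξ ≤ 1`,
`ξ = 1` on `(-δ_- + Δ_-, δ_+ - Δ_+)` and `ξ = 0` outside `(-δ_-, δ_+)`. -/
structure CutOff (xi : ℝ → ℝ) (dm dp Dm Dp : ℝ) : Prop where
  smooth : ContDiff ℝ (⊤ : ℕ∞) xi
  compact_supp : HasCompactSupport xi
  nonneg : ∀ x, 0 ≤ xi x
  le_one : ∀ x, xi x ≤ 1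
  eq_one : ∀ x ∈ Set.Ioo (-dm + Dm) (dp - Dp), xi x = 1
  eq_zero : ∀ x, x ∉ Set.Ioo (-dm) dp → xi x = 0

/-- The JWKB ansatz `g(x) = exp(-Σ_{k=-1}^{n-1} λ^{-k/2} ψ_k(x))`, with the
primitives fixed by `ψ_k(x₀) = 0` (`x₀ = 0` in Section 3, `x₀ = x_b` in Section 5). -/
def ansatz (n : ℕ) (lam : ℂ) (psi : ℤ → ℝ → ℂ) (x0 x : ℝ) : ℂ :=
  Complex.exp (-∑ k ∈ Finset.Icc (-1 : ℤ) ((n : ℤ) - 1),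
    lam ^ (-(k : ℂ) / 2) * ∫ t in x0..x, psi k t)

/-- `L²(ℝ)` norm. -/
def l2 (f : ℝ → ℂ) : ℝ := (eLpNorm f 2 volume).toReal

/-- `L²(s)` norm. -/
def l2On (s : Set ℝ) (f : ℝ → ℂ) : ℝ := (eLpNorm f 2 (volume.restrict s)).toReal

/-- The quantity `κ(λ) = (‖ξ''g‖ + ‖ξ'g'‖)/‖ξg‖`. -/
def kappaQ (xi : ℝ → ℝ) (g : ℝ → ℂ) : ℝ :=
  (l2 (fun x => Complex.ofReal (deriv (deriv xi) x) * g x) +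
      l2 (fun x => Complex.ofReal (deriv xi x) * deriv g x)) /
    l2 (fun x => Complex.ofReal (xi x) * g x)

/-- Same on the half-line. -/
def kappaQOn (s : Set ℝ) (xi : ℝ → ℝ) (g : ℝ → ℂ) : ℝ :=
  (l2On s (fun x => Complex.ofReal (deriv (deriv xi) x) * g x) +
      l2On s (fun x => Complex.ofReal (deriv xi x) * deriv g x)) /
    l2On s (fun x => Complex.ofReal (xi x) * g x)

/-- `(H_V - λ)f` pointwise, for the maximal Schrödinger operator `H_V = -d²/dx² + V`. -/
def schrod (V : ℝ → ℂ) (lam : ℂ) (f : ℝ → ℂ) (x : ℝ) : ℂ :=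
  -(deriv (deriv f) x) + (V x - lam) * f x

/-- The decay rate of `κ_±`. -/
def cutRate (bdd : Prop) [Decidable bdd] (delta : ℝ → ℝ) (nu eps1 eps2 c : ℝ) (lam : ℝ) : ℝ :=
  if bdd then Real.exp (-c * lam ^ (eps2 / 2))
  else Real.exp (-c * delta lam ^ (nu + 1 + eps1))

/-- The remainder rate `σ_±^{(n)}` (here stated for the `+` side; for the `-` side
apply it with the reflected data). -/
def sigmaRate (bdd : Prop) [Decidable bdd] (V : ℝ → ℂ) (delta : ℝ → ℝ)
    (nu eps2 : ℝ) (n : ℕ) (J : ℝ → Set ℝ) (lam : ℝ) : ℝ :=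
  if bdd then
    (if 0 ≤ nu then lam ^ (-(((n : ℝ) + 1) / 2) * (1 - (1 + eps2) * nu))
     else lam ^ (-((n : ℝ) + 1) / 2))
  else
    (if 0 ≤ nu then delta lam ^ (((n : ℝ) + 1) * nu) * lam ^ ((1 - (n : ℝ)) / 2)
     else lam ^ (-((n : ℝ) + 1) / 2) *
       sSup ((fun x => ‖V x‖ * jb x ^ (((n : ℝ) + 1) * nu)) '' J lam))

/-- Mollification `φ^ε = w_ε * φ` with `w_ε(x) = ε⁻¹ w(x/ε)`. -/
def mol (w : ℝ → ℝ) (eps : ℝ) (φ : ℝ → ℂ) (x : ℝ) : ℂ :=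
  ∫ y : ℝ, (eps⁻¹ * w ((x - y) / eps)) • φ y

/-- A standard mollifier: `w ∈ C_c^∞`, `0 ≤ w ≤ 1`, `supp w = [-1,1]`, `∫ w = 1`. -/
structure Mollifier (w : ℝ → ℝ) : Prop where
  smooth : ContDiff ℝ (⊤ : ℕ∞) w
  nonneg : ∀ x, 0 ≤ w x
  le_one : ∀ x, w x ≤ 1
  supp : Function.support w ⊆ Set.Icc (-1 : ℝ) 1
  integral_one : ∫ x : ℝ, w x = 1

/-- The `L^p` modulus of continuity `ω_p(ε; φ, J)` (with values in `ℝ≥0∞`). -/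
def modCont (p : ℝ≥0∞) (eps : ℝ) (φ : ℝ → ℂ) (J : Set ℝ) : ℝ≥0∞ :=
  ⨆ t ∈ {t : ℝ | 0 < |t| ∧ |t| < eps},
    eLpNorm (fun x => φ (x + t) - φ x) p (volume.restrict J)

/-- Assumption B of the paper: `V` satisfies Assumption A with `N ∈ {1,2}`,
`ν_± < 0`, and `W = W₁ + W₂` with `|Im W₁| ≤ (1-ε)|Im V|`,
`|Re W₁| ≲ |Im V|²⟨x⟩^{-4(ν_±+ε₁)-2}` on `ℝ_±`,
and `W₂ ∈ L²(ℝ)` with compact support. -/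
structure AssumptionB (N : ℕ) (V W1 W2 : ℝ → ℂ) (nuM nuP eps1 eps2 eps : ℝ) : Prop where
  base : AssumptionA N V nuM nuP eps1 eps2
  N_le : N ≤ 2
  nuM_neg : nuM < 0
  nuP_neg : nuP < 0
  eps_pos : 0 < eps
  eps_lt_one : eps < 1
  imW1 : ∀ x, |(W1 x).im| ≤ (1 - eps) * |(V x).im|
  reW1_p : ∃ C > 0, ∀ x > (0 : ℝ),
    |(W1 x).re| ≤ C * ((V x).im) ^ 2 * jb x ^ (-(4 * (nuP + eps1)) - 2)
  reW1_m : ∃ C > 0, ∀ x < (0 : ℝ),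
    |(W1 x).re| ≤ C * ((V x).im) ^ 2 * jb x ^ (-(4 * (nuM + eps1)) - 2)
  W2_L2 : MemLp W2 2 volume
  W2_supp : HasCompactSupport W2

/-- The mollified singular part `W̃ = (χ₋W₁)^{ε_-} + (χ₊W₁)^{ε_+} + W₂^{ε₀}`,
with `ε_ι = λ^{-α_ι}`. -/
def tildeW (w : ℝ → ℝ) (W1 W2 : ℝ → ℂ) (am ap a0 : ℝ) (lam : ℝ) (x : ℝ) : ℂ :=
  mol w (lam ^ (-am)) (fun y => if y < 0 then W1 y else 0) x +
    mol w (lam ^ (-ap)) (fun y => if 0 < y then W1 y else 0) x +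
    mol w (lam ^ (-a0)) W2 x

/-- Assumption C of the paper (Section 5): `N > 1`, `Im V → +∞` at `+∞`,
the conditions of Assumption A on the positive half-line, and the lower bound
`Im V' ≳ Im V ⟨x⟩^ν`. -/
structure AssumptionC (N : ℕ) (V : ℝ → ℂ) (nu eps1 : ℝ) : Prop where
  N_gt : 1 < N
  smooth : ContDiff ℝ N V
  im_tendsto : Tendsto (fun x => (V x).im) atTop atTop
  derIm : ∀ m : ℕ, 1 ≤ m → m ≤ N →
    (fun x => (iteratedDeriv m V x).im) =O[atTop]
      (fun x => |(V x).im| * jb x ^ ((m : ℝ) * nu))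
  der : ∀ m : ℕ, 1 ≤ m → m ≤ N →
    (fun x => iteratedDeriv m V x) =O[atTop]
      (fun x => ‖V x‖ * jb x ^ ((m : ℝ) * nu))
  eps1_pos : 0 < eps1
  big : (fun x => jb x ^ (4 * (nu + eps1) + 2) * (jb x ^ (4 * nu + 2) + |(V x).re|))
    =O[atTop] (fun x => ((V x).im) ^ 2)
  imDeriv_lb : ∃ c > 0, ∃ x0 : ℝ, ∀ x ≥ x0,
    c * (V x).im * jb x ^ nu ≤ (iteratedDeriv 1 V x).im

end

noncomputable section
open scoped Pointwise

namespace Stmt1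

variable (V : ℝ → ℂ) (n : ℕ)

/-- monomial attached to a multiset of derivative orders -/
def mono (L : Multiset ℕ) : ℝ → ℂ := fun x => (L.map (fun m => iteratedDeriv m V x)).prod

def gens (j r : ℕ) : Set (ℝ → ℂ) :=
  {f | ∃ L : Multiset ℕ, (∀ m ∈ L, 1 ≤ m ∧ m ≤ n) ∧ L.sum = r ∧ Multiset.card L = j ∧ f = mono V L}

def TT (j r : ℕ) : Submodule ℂ (ℝ → ℂ) := Submodule.span ℂ (gens V n j r)

variable {V n}

lemma mono_zero : mono V 0 = fun _ => 1 := by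
  funext x; simp [mono]

lemma mono_cons (a : ℕ) (L : Multiset ℕ) :
    mono V (a ::ₘ L) = fun x => iteratedDeriv a V x * mono V L x := by
  funext x; simp [mono]

lemma mono_add (L₁ L₂ : Multiset ℕ) : mono V (L₁ + L₂) = mono V L₁ * mono V L₂ := by
  funext x; simp [mono, Multiset.prod_add]

lemma mono_mem {L : Multiset ℕ} (h : ∀ m ∈ L, 1 ≤ m ∧ m ≤ n) :
    mono V L ∈ TT V n (Multiset.card L) L.sum :=
  Submodule.subset_span ⟨L, h, rfl, rfl, rfl⟩

lemma TT_mul {j r j' r' : ℕ} {f g : ℝ → ℂ} (hf : f ∈ TT V n j r) (hg : g ∈ TT V n j' r') :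
    f * g ∈ TT V n (j + j') (r + r') := by
  have h := Submodule.mul_mem_mul hf hg
  rw [TT, TT, Submodule.span_mul_span] at h
  refine Submodule.span_le.2 ?_ h
  rintro x hx
  rw [Set.mem_mul] at hx
  obtain ⟨a, ha, b, hb, rfl⟩ := hx
  obtain ⟨L₁, hL₁, hs₁, hc₁, rfl⟩ := ha
  obtain ⟨L₂, hL₂, hs₂, hc₂, rfl⟩ := hb
  rw [← mono_add]
  apply Submodule.subset_span
  exact ⟨L₁ + L₂, by intro m hm; rcases Multiset.mem_add.1 hm with h | h; exacts [hL₁ m h, hL₂ m h],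
    by simp [hs₁, hs₂], by simp [hc₁, hc₂], rfl⟩

lemma TT_congr {j r j' r' : ℕ} {f : ℝ → ℂ} (h : f ∈ TT V n j r) (hj : j = j') (hr : r = r') :
    f ∈ TT V n j' r' := by subst hj hr; exact h

lemma TT_mul' {j r j' r' j'' r'' : ℕ} {f g : ℝ → ℂ} (hf : f ∈ TT V n j r) (hg : g ∈ TT V n j' r')
    (hj : j + j' = j'') (hr : r + r' = r'') :
    (fun x => f x * g x) ∈ TT V n j'' r'' := by
  subst hj hr; exact TT_mul hf hg

lemma multiset_card_le_sum (L : Multiset ℕ) (h : ∀ m ∈ L, 1 ≤ m) : Multiset.card L ≤ L.sum := by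
  induction L using Multiset.induction_on with
  | empty => simp
  | cons a L ih =>
    simp only [Multiset.card_cons, Multiset.sum_cons]
    have := h a (Multiset.mem_cons_self a L)
    have := ih (fun m hm => h m (Multiset.mem_cons_of_mem hm))
    omega

lemma mem_le_bound {L : Multiset ℕ} (h1 : ∀ m ∈ L, 1 ≤ m) {m : ℕ} (hm : m ∈ L) :
    m + Multiset.card L ≤ L.sum + 1 := by
  obtain ⟨L', rfl⟩ : ∃ L', L = m ::ₘ L' := ⟨L.erase m, (Multiset.cons_erase hm).symm⟩
  have := multiset_card_le_sum L' (fun x hx => h1 x (Multiset.mem_cons_of_mem hx))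
  simp only [Multiset.card_cons, Multiset.sum_cons]
  omega

variable (hV : ContDiff ℝ (n+1) V)
include hV

lemma diff_iter {m : ℕ} (hm : m ≤ n) : Differentiable ℝ (iteratedDeriv m V) := by
  apply hV.differentiable_iteratedDeriv; exact_mod_cast Nat.lt_succ_of_le hm

lemma mono_diff_deriv (L : Multiset ℕ) (hL : ∀ m ∈ L, 1 ≤ m ∧ m + 1 ≤ n) :
    Differentiable ℝ (mono V L) ∧ deriv (mono V L) ∈ TT V n (Multiset.card L) (L.sum + 1) := by
  induction L using Multiset.induction_on with
  | empty =>
    rw [mono_zero]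
    refine ⟨differentiable_const 1, ?_⟩
    have : deriv (fun _ : ℝ => (1:ℂ)) = (0 : ℝ → ℂ) := by funext x; simp
    rw [this]; exact Submodule.zero_mem _
  | cons a L ih =>
    have ha := hL a (Multiset.mem_cons_self a L)
    have hL' : ∀ m ∈ L, 1 ≤ m ∧ m + 1 ≤ n := fun m hm => hL m (Multiset.mem_cons_of_mem hm)
    obtain ⟨ihd, ihm⟩ := ih hL'
    have hda : Differentiable ℝ (iteratedDeriv a V) := diff_iter hV (by omega)
    rw [mono_cons]
    constructor
    · exact hda.mul ihd
    · have hder : deriv (fun x => iteratedDeriv a V x * mono V L x) =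
          fun x => iteratedDeriv (a+1) V x * mono V L x + iteratedDeriv a V x * deriv (mono V L) x := by
        funext x
        rw [deriv_fun_mul (hda x) (ihd x), iteratedDeriv_succ]
      rw [hder]
      have h1 : (fun x => iteratedDeriv (a+1) V x * mono V L x) ∈
          TT V n (Multiset.card (a ::ₘ L)) ((a ::ₘ L).sum + 1) := by
        have : (fun x => iteratedDeriv (a+1) V x * mono V L x) = mono V ((a+1) ::ₘ L) := by
          rw [mono_cons]
        rw [this]
        refine TT_congr (mono_mem (V := V) (n := n) (L := (a+1) ::ₘ L) ?_) (by simp) (by simp; omega)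
        intro m hm
        rcases Multiset.mem_cons.1 hm with rfl | h
        · omega
        · exact ⟨(hL' m h).1, by have := (hL' m h).2; omega⟩
      have h2 : (fun x => iteratedDeriv a V x * deriv (mono V L) x) ∈
          TT V n (Multiset.card (a ::ₘ L)) ((a ::ₘ L).sum + 1) := by
        have hsing : iteratedDeriv a V ∈ TT V n 1 a := by
          have h0 := mono_mem (V := V) (n := n) (L := {a}) (by intro m hm; simp at hm; omega)
          have h1 : mono V {a} = iteratedDeriv a V := by funext x; simp [mono]
          rw [h1] at h0; simpa using h0
        exact TT_mul' hsing ihm (by simp only [Multiset.card_cons]; omega) (by simp only [Multiset.sum_cons]; omega)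
      exact Submodule.add_mem _ h1 h2

lemma tt_deriv {j r : ℕ} {f : ℝ → ℂ} (hf : f ∈ TT V n j r) (hc : r + 2 ≤ n + j) :
    Differentiable ℝ f ∧ deriv f ∈ TT V n j (r+1) := by
  refine Submodule.span_induction ?_ ?_ ?_ ?_ hf
  · rintro g ⟨L, hL, rfl, rfl, rfl⟩
    apply mono_diff_deriv hV
    intro m hm
    refine ⟨(hL m hm).1, ?_⟩
    have h1 : ∀ m' ∈ L, 1 ≤ m' := fun m' hm' => (hL m' hm').1
    have := mem_le_bound h1 hm
    omega
  · constructor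
    · exact differentiable_const 0
    · have h0 : deriv (0 : ℝ → ℂ) = (0 : ℝ → ℂ) := by
        funext x
        rw [show (0:ℝ→ℂ) = (fun _ : ℝ => (0:ℂ)) from rfl, deriv_const]
      rw [h0]; exact Submodule.zero_mem _
  · rintro g h - - ⟨hgd, hgm⟩ ⟨hhd, hhm⟩
    refine ⟨hgd.add hhd, ?_⟩
    have : deriv (g + h) = fun x => deriv g x + deriv h x := by
      funext x
      have : g + h = fun y => g y + h y := rfl
      rw [this, deriv_fun_add (hgd x) (hhd x)]
    rw [this]
    exact Submodule.add_mem _ hgm hhm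
  · rintro c g - ⟨hgd, hgm⟩
    refine ⟨hgd.const_smul c, ?_⟩
    have : deriv (c • g) = fun x => c • deriv g x := by
      funext x
      have : c • g = fun y => c • g y := rfl
      rw [this, deriv_fun_const_smul c (hgd x)]
    rw [this]
    exact Submodule.smul_mem _ c hgm

end Stmt1
section Part2
namespace Stmt1
variable {V : ℝ → ℂ} {n : ℕ}

lemma aux_prod {M : Type*} [CommMonoid M] (L : Multiset ℕ) (h : ∀ m ∈ L, 1 ≤ m ∧ m ≤ n)
    (G : ℕ → M) (hG : ∀ m, m ∉ L → G m = 1) :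
    ∏ i : Fin n, G ((i : ℕ) + 1) = ∏ m ∈ L.toFinset, G m := by
  have himg : L.toFinset ⊆ Finset.image (fun i : Fin n => (i : ℕ) + 1) Finset.univ := by
    intro m hm
    have := h m (Multiset.mem_toFinset.1 hm)
    simp only [Finset.mem_image, Finset.mem_univ, true_and]
    exact ⟨⟨m - 1, by omega⟩, by simp; omega⟩
  have h1 : ∏ m ∈ Finset.image (fun i : Fin n => (i : ℕ) + 1) Finset.univ, G m
      = ∏ i : Fin n, G ((i : ℕ) + 1) :=
    Finset.prod_image (by intro a _ b _ hab; exact Fin.ext (by simp only at hab; omega))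
  rw [← h1]
  exact (Finset.prod_subset himg
    (fun m _ hm => hG m (by simpa [Multiset.mem_toFinset] using hm))).symm

lemma aux_sum {M : Type*} [AddCommMonoid M] (L : Multiset ℕ) (h : ∀ m ∈ L, 1 ≤ m ∧ m ≤ n)
    (G : ℕ → M) (hG : ∀ m, m ∉ L → G m = 0) :
    ∑ i : Fin n, G ((i : ℕ) + 1) = ∑ m ∈ L.toFinset, G m := by
  have himg : L.toFinset ⊆ Finset.image (fun i : Fin n => (i : ℕ) + 1) Finset.univ := by
    intro m hm
    have := h m (Multiset.mem_toFinset.1 hm)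
    simp only [Finset.mem_image, Finset.mem_univ, true_and]
    exact ⟨⟨m - 1, by omega⟩, by simp; omega⟩
  have h1 : ∑ m ∈ Finset.image (fun i : Fin n => (i : ℕ) + 1) Finset.univ, G m
      = ∑ i : Fin n, G ((i : ℕ) + 1) :=
    Finset.sum_image (by intro a _ b _ hab; exact Fin.ext (by simp only at hab; omega))
  rw [← h1]
  exact (Finset.sum_subset himg
    (fun m _ hm => hG m (by simpa [Multiset.mem_toFinset] using hm))).symm

lemma multiset_sum_eq (L : Multiset ℕ) : L.sum = ∑ a ∈ L.toFinset, L.count a * a := by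
  conv_lhs => rw [← Multiset.map_id L]
  rw [Finset.sum_multiset_map_count]; simp [smul_eq_mul]

lemma gens_isTType {j r : ℕ} {f : ℝ → ℂ} (h : f ∈ gens V n j r) : IsTType V j r n f := by
  obtain ⟨L, hL, rfl, rfl, rfl⟩ := h
  refine ⟨({(fun i : Fin n => L.count ((i : ℕ) + 1))} : Finset (Fin n → ℕ)), fun _ => 1, ?_, ?_⟩
  · intro α hα
    simp only [Finset.mem_singleton] at hα
    subst hα
    constructor
    · rw [aux_sum L hL (fun m => m * L.count m)
        (fun m hm => by simp [Multiset.count_eq_zero_of_notMem hm])]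
      rw [multiset_sum_eq]
      exact Finset.sum_congr rfl (fun a _ => mul_comm _ _)
    · rw [aux_sum L hL (fun m => L.count m)
        (fun m hm => by simp [Multiset.count_eq_zero_of_notMem hm])]
      exact (Multiset.toFinset_sum_count_eq L)
  · intro x
    simp only [Finset.sum_singleton, one_mul]
    rw [mono, Finset.prod_multiset_map_count]
    exact (aux_prod L hL (fun m => iteratedDeriv m V x ^ L.count m)
      (fun m hm => by simp [Multiset.count_eq_zero_of_notMem hm])).symm

lemma isTType_zero (j r : ℕ) : IsTType V j r n 0 :=
  ⟨∅, fun _ => 0, by simp, by simp⟩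

lemma tt_isTType {j r : ℕ} {f : ℝ → ℂ} (h : f ∈ TT V n j r) : IsTType V j r n f := by
  refine Submodule.span_induction (fun g hg => gens_isTType hg) (isTType_zero j r) ?_ ?_ h
  · rintro g h - - ⟨A₁, c₁, h₁, e₁⟩ ⟨A₂, c₂, h₂, e₂⟩
    refine ⟨A₁ ∪ A₂, fun α => (if α ∈ A₁ then c₁ α else 0) + (if α ∈ A₂ then c₂ α else 0), ?_, ?_⟩
    · intro α hα
      rcases Finset.mem_union.1 hα with h' | h'
      exacts [h₁ _ h', h₂ _ h']
    · intro x
      have hgx : (g + h) x = g x + h x := rfl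
      rw [hgx, e₁ x, e₂ x]
      rw [Finset.sum_congr rfl (fun α _ => add_mul (if α ∈ A₁ then c₁ α else 0)
        (if α ∈ A₂ then c₂ α else 0) _), Finset.sum_add_distrib]
      simp only [ite_mul, zero_mul]
      congr 1
      · rw [Finset.sum_ite_mem, Finset.union_inter_cancel_left]
      · rw [Finset.sum_ite_mem, Finset.union_inter_cancel_right]
  · rintro c g - ⟨A, cf, hA, e⟩
    refine ⟨A, fun α => c * cf α, hA, fun x => ?_⟩
    have hgx : (c • g) x = c * g x := rfl
    rw [hgx, e x, Finset.mul_sum]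
    exact Finset.sum_congr rfl (fun α _ => (mul_assoc _ _ _).symm)

lemma tt_one {r : ℕ} {f : ℝ → ℂ} (h : f ∈ TT V n 1 r) :
    ∃ c : ℂ, ∀ x, f x = c * iteratedDeriv r V x := by
  refine Submodule.span_induction ?_ ⟨0, by simp [Pi.zero_apply]⟩ ?_ ?_ h
  · rintro g ⟨L, hL, hs, hc, rfl⟩
    obtain ⟨a, rfl⟩ := Multiset.card_eq_one.1 hc
    simp only [Multiset.sum_singleton] at hs
    subst hs
    exact ⟨1, fun x => by simp [mono]⟩
  · rintro g h - - ⟨c₁, e₁⟩ ⟨c₂, e₂⟩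
    exact ⟨c₁ + c₂, fun x => by have : (g + h) x = g x + h x := rfl; rw [this, e₁, e₂]; ring⟩
  · rintro a g - ⟨c₁, e₁⟩
    exact ⟨a * c₁, fun x => by have : (a • g) x = a * g x := rfl; rw [this, e₁]; ring⟩

end Stmt1
end Part2
section Part3
namespace Stmt1
variable (V : ℝ → ℂ) (n : ℕ) (lam : ℂ)

/-- `w = (λ - V)^{1/2}` -/
def wf : ℝ → ℂ := fun x => (lam - V x) ^ ((1:ℂ)/2)

/-- representation `f = Σ_{l=lo}^{hi} T_l · w^{m-2l}` with `T_l` of type `T_l^r`. -/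
def Rep (r lo hi : ℕ) (m : ℤ) (f : ℝ → ℂ) : Prop :=
  ∃ T : ℕ → ℝ → ℂ, (∀ l ∈ Finset.Icc lo hi, T l ∈ TT V n l r) ∧
    ∀ x, f x = ∑ l ∈ Finset.Icc lo hi, T l x * wf V lam x ^ (m - 2*(l:ℤ))

variable {V n lam}
variable {hV : ContDiff ℝ (n+1) V}

lemma hu0 (hlamV : ∀ x : ℝ, lam - V x ∈ Complex.slitPlane) (x : ℝ) : lam - V x ≠ 0 :=
  Complex.slitPlane_ne_zero (hlamV x)

lemma hw0 (hlamV : ∀ x : ℝ, lam - V x ∈ Complex.slitPlane) (x : ℝ) : wf V lam x ≠ 0 := by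
  rw [wf]
  simp only [ne_eq, Complex.cpow_eq_zero_iff, not_and_or, not_ne_iff]
  exact Or.inl (hu0 hlamV x)

lemma wf_sq (hlamV : ∀ x : ℝ, lam - V x ∈ Complex.slitPlane) (x : ℝ) :
    wf V lam x * wf V lam x = lam - V x := by
  rw [wf, ← Complex.cpow_add _ _ (hu0 hlamV x)]
  norm_num

lemma hasDerivAt_wf (hV : ContDiff ℝ (n+1) V)
    (hlamV : ∀ x : ℝ, lam - V x ∈ Complex.slitPlane) (x : ℝ) :
    HasDerivAt (wf V lam) (-(deriv V x) / (2 * wf V lam x)) x := by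
  have hVd : Differentiable ℝ V := hV.differentiable (by simp)
  have h1 : HasDerivAt (fun y => lam - V y) (-(deriv V x)) x := by
    exact (hVd x).hasDerivAt.const_sub lam
  have h2 : HasDerivAt (wf V lam) (((1:ℂ)/2) * (lam - V x) ^ ((1:ℂ)/2 - 1) * (-(deriv V x))) x := by
    exact (Complex.hasStrictDerivAt_cpow_const (c := (1:ℂ)/2) (hlamV x)).hasDerivAt.comp x h1
  have h3 : (lam - V x) ^ ((1:ℂ)/2 - 1) = (wf V lam x)⁻¹ := by
    have : (1:ℂ)/2 - 1 = -((1:ℂ)/2) := by ring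
    rw [this, Complex.cpow_neg, wf]
  rw [h3] at h2
  convert h2 using 1
  have := hw0 hlamV x
  field_simp

lemma hasDerivAt_wfz (hV : ContDiff ℝ (n+1) V)
    (hlamV : ∀ x : ℝ, lam - V x ∈ Complex.slitPlane) (m : ℤ) (x : ℝ) :
    HasDerivAt (fun y => wf V lam y ^ m)
      ((m:ℂ) * wf V lam x ^ (m-1) * (-(deriv V x) / (2 * wf V lam x))) x :=
  (hasDerivAt_zpow m (wf V lam x) (Or.inl (hw0 hlamV x))).comp x (hasDerivAt_wf hV hlamV x)

namespace Rep

lemma congr' {r lo hi : ℕ} {m : ℤ} {f g : ℝ → ℂ} (h : Rep V n lam r lo hi m f)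
    (hfg : ∀ x, f x = g x) : Rep V n lam r lo hi m g := by
  obtain ⟨T, hT, hf⟩ := h
  exact ⟨T, hT, fun x => (hfg x).symm ▸ hf x⟩

lemma zero (r lo hi : ℕ) (m : ℤ) : Rep V n lam r lo hi m (fun _ => 0) :=
  ⟨fun _ => 0, fun _ _ => Submodule.zero_mem _, fun x => by simp⟩

lemma mono_range {r lo hi lo' hi' : ℕ} {m : ℤ} {f : ℝ → ℂ} (h : Rep V n lam r lo hi m f)
    (hlo : lo' ≤ lo) (hhi : hi ≤ hi') : Rep V n lam r lo' hi' m f := by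
  obtain ⟨T, hT, hf⟩ := h
  refine ⟨fun l => if l ∈ Finset.Icc lo hi then T l else 0, ?_, ?_⟩
  · intro l _
    dsimp only
    split
    · exact hT _ ‹_›
    · exact Submodule.zero_mem _
  · intro x
    dsimp only
    rw [hf x]
    have e1 : ∑ l ∈ Finset.Icc lo hi,
        (if l ∈ Finset.Icc lo hi then T l else 0) x * wf V lam x ^ (m - 2*(l:ℤ))
        = ∑ l ∈ Finset.Icc lo' hi',
        (if l ∈ Finset.Icc lo hi then T l else 0) x * wf V lam x ^ (m - 2*(l:ℤ)) := by
      apply Finset.sum_subset (Finset.Icc_subset_Icc hlo hhi)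
      intro l _ hnl
      rw [if_neg hnl]
      simp
    rw [← e1]
    exact Finset.sum_congr rfl (fun l hl => by rw [if_pos hl])

lemma add {r lo hi : ℕ} {m : ℤ} {f g : ℝ → ℂ} (h₁ : Rep V n lam r lo hi m f)
    (h₂ : Rep V n lam r lo hi m g) : Rep V n lam r lo hi m (fun x => f x + g x) := by
  obtain ⟨T₁, hT₁, hf₁⟩ := h₁
  obtain ⟨T₂, hT₂, hf₂⟩ := h₂
  refine ⟨fun l => T₁ l + T₂ l, fun l hl => Submodule.add_mem _ (hT₁ l hl) (hT₂ l hl), fun x => ?_⟩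
  show f x + g x = _
  rw [hf₁ x, hf₂ x, ← Finset.sum_add_distrib]
  exact Finset.sum_congr rfl (fun l _ => by show _ = (T₁ l x + T₂ l x) * _; ring)

lemma cmul {r lo hi : ℕ} {m : ℤ} {f : ℝ → ℂ} (c : ℂ) (h : Rep V n lam r lo hi m f) :
    Rep V n lam r lo hi m (fun x => c * f x) := by
  obtain ⟨T, hT, hf⟩ := h
  refine ⟨fun l => c • T l, fun l hl => Submodule.smul_mem _ c (hT l hl), fun x => ?_⟩
  show c * f x = _
  rw [hf x, Finset.mul_sum]
  exact Finset.sum_congr rfl (fun l _ => by show _ = (c * T l x) * _; ring)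

lemma sum {ι : Type*} {r lo hi : ℕ} {m : ℤ} (s : Finset ι) (F : ι → ℝ → ℂ)
    (h : ∀ i ∈ s, Rep V n lam r lo hi m (F i)) :
    Rep V n lam r lo hi m (fun x => ∑ i ∈ s, F i x) := by
  classical
  induction s using Finset.induction_on with
  | empty => exact (zero r lo hi m).congr' (fun x => by simp)
  | insert a s ha ih =>
    have := (h a (Finset.mem_insert_self a s)).add
      (ih (fun i hi => h i (Finset.mem_insert_of_mem hi)))
    exact this.congr' (fun x => by rw [Finset.sum_insert ha])

lemma mul (hlamV : ∀ x : ℝ, lam - V x ∈ Complex.slitPlane)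
    {r₁ lo₁ hi₁ r₂ lo₂ hi₂ : ℕ} {m₁ m₂ : ℤ} {f g : ℝ → ℂ}
    (h₁ : Rep V n lam r₁ lo₁ hi₁ m₁ f) (h₂ : Rep V n lam r₂ lo₂ hi₂ m₂ g) :
    Rep V n lam (r₁+r₂) (lo₁+lo₂) (hi₁+hi₂) (m₁+m₂) (fun x => f x * g x) := by
  obtain ⟨T₁, hT₁, hf₁⟩ := h₁
  obtain ⟨T₂, hT₂, hf₂⟩ := h₂
  classical
  refine ⟨fun l => fun x => ∑ p ∈ (Finset.Icc lo₁ hi₁ ×ˢ Finset.Icc lo₂ hi₂).filter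
      (fun p => p.1 + p.2 = l), T₁ p.1 x * T₂ p.2 x, ?_, ?_⟩
  · intro l _
    dsimp only
    have hfn : (fun x => ∑ p ∈ (Finset.Icc lo₁ hi₁ ×ˢ Finset.Icc lo₂ hi₂).filter
        (fun p => p.1 + p.2 = l), T₁ p.1 x * T₂ p.2 x)
        = ∑ p ∈ (Finset.Icc lo₁ hi₁ ×ˢ Finset.Icc lo₂ hi₂).filter
        (fun p => p.1 + p.2 = l), (fun x => T₁ p.1 x * T₂ p.2 x) := by
      funext x; rw [Finset.sum_apply]
    rw [hfn]
    apply Submodule.sum_mem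
    rintro ⟨a, b⟩ hp
    simp only [Finset.mem_filter, Finset.mem_product, Finset.mem_Icc] at hp
    exact TT_mul' (hT₁ a (Finset.mem_Icc.2 hp.1.1)) (hT₂ b (Finset.mem_Icc.2 hp.1.2))
      (by omega) rfl
  · intro x
    show f x * g x = _
    dsimp only
    rw [hf₁ x, hf₂ x, Finset.sum_mul_sum, ← Finset.sum_product']
    have key : ∀ p ∈ Finset.Icc lo₁ hi₁ ×ˢ Finset.Icc lo₂ hi₂,
        (T₁ p.1 x * wf V lam x ^ (m₁ - 2*(p.1:ℤ))) * (T₂ p.2 x * wf V lam x ^ (m₂ - 2*(p.2:ℤ)))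
        = (T₁ p.1 x * T₂ p.2 x) * wf V lam x ^ ((m₁+m₂) - 2*((p.1+p.2 : ℕ):ℤ)) := by
      rintro ⟨a, b⟩ -
      rw [show ((m₁+m₂) - 2*((a+b : ℕ):ℤ)) = (m₁ - 2*(a:ℤ)) + (m₂ - 2*(b:ℤ)) by push_cast; ring,
        zpow_add₀ (hw0 hlamV x)]
      ring
    rw [Finset.sum_congr rfl key]
    rw [← Finset.sum_fiberwise_of_maps_to (g := fun p : ℕ × ℕ => p.1 + p.2)
      (t := Finset.Icc (lo₁+lo₂) (hi₁+hi₂)) ?_]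
    · apply Finset.sum_congr rfl
      intro l _
      rw [Finset.sum_mul]
      apply Finset.sum_congr rfl
      rintro ⟨a, b⟩ hp
      simp only [Finset.mem_filter] at hp
      rw [hp.2]
    · rintro ⟨a, b⟩ hp
      simp only [Finset.mem_product, Finset.mem_Icc] at hp
      dsimp only
      exact Finset.mem_Icc.2 ⟨by omega, by omega⟩

lemma winv (hlamV : ∀ x : ℝ, lam - V x ∈ Complex.slitPlane)
    {r lo hi : ℕ} {m : ℤ} {f : ℝ → ℂ} (h : Rep V n lam r lo hi m f) :
    Rep V n lam r lo hi (m-1) (fun x => (wf V lam x)⁻¹ * f x) := by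
  obtain ⟨T, hT, hf⟩ := h
  refine ⟨T, hT, fun x => ?_⟩
  show (wf V lam x)⁻¹ * f x = _
  rw [hf x, Finset.mul_sum]
  apply Finset.sum_congr rfl
  intro l _
  rw [show (m - 1 - 2*(l:ℤ)) = (-1) + (m - 2*(l:ℤ)) by ring, zpow_add₀ (hw0 hlamV x),
    zpow_neg_one]
  ring

lemma deriv' (hV : ContDiff ℝ (n+1) V) (hlamV : ∀ x : ℝ, lam - V x ∈ Complex.slitPlane)
    (hn : 1 ≤ n) {r lo hi : ℕ} {m : ℤ} {f : ℝ → ℂ} (h : Rep V n lam r lo hi m f)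
    (hcond : r + 2 ≤ n + lo) :
    Differentiable ℝ f ∧ Rep V n lam (r+1) lo (hi+1) m (deriv f) := by
  obtain ⟨T, hT, hf⟩ := h
  have hfun : f = fun x => ∑ l ∈ Finset.Icc lo hi, T l x * wf V lam x ^ (m - 2*(l:ℤ)) :=
    funext hf
  have hTd : ∀ l ∈ Finset.Icc lo hi, Differentiable ℝ (T l) ∧ deriv (T l) ∈ TT V n l (r+1) := by
    intro l hl
    have hlo : lo ≤ l := (Finset.mem_Icc.1 hl).1
    exact tt_deriv hV (hT l hl) (by omega)
  have hD : ∀ x, HasDerivAt f (∑ l ∈ Finset.Icc lo hi,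
      (deriv (T l) x * wf V lam x ^ (m - 2*(l:ℤ)) +
        T l x * (((m - 2*(l:ℤ) : ℤ) : ℂ) * wf V lam x ^ ((m - 2*(l:ℤ))-1) *
          (-(deriv V x) / (2 * wf V lam x))))) x := by
    intro x
    rw [hfun]
    apply HasDerivAt.fun_sum
    intro l hl
    exact ((hTd l hl).1.differentiableAt.hasDerivAt).mul (hasDerivAt_wfz hV hlamV _ x)
  refine ⟨fun x => (hD x).differentiableAt, ?_⟩
  -- split derivative into two Rep parts
  have hderiv : deriv f = fun x => (∑ l ∈ Finset.Icc lo hi,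
        deriv (T l) x * wf V lam x ^ (m - 2*(l:ℤ))) +
      (∑ l ∈ Finset.Icc lo hi,
        (-(((m:ℂ) - 2*(l:ℕ)))/2 * (deriv V x * T l x)) * wf V lam x ^ (m - 2*(((l+1):ℕ):ℤ))) := by
    funext x
    rw [(hD x).deriv, ← Finset.sum_add_distrib]
    apply Finset.sum_congr rfl
    intro l _
    congr 1
    have hwne := hw0 hlamV x
    rw [show (m - 2*(((l+1):ℕ):ℤ)) = ((m - 2*(l:ℤ)) - 1) + (-1) by push_cast; ring,
      zpow_add₀ hwne, zpow_neg_one]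
    field_simp
    push_cast
    ring
  rw [hderiv]
  apply Rep.add
  · -- first part
    refine Rep.mono_range ⟨fun l => deriv (T l), fun l hl => (hTd l hl).2, fun x => rfl⟩
      le_rfl (Nat.le_succ hi)
  · -- second part, reindexed
    have h2 : Rep V n lam (r+1) (lo+1) (hi+1) m (fun x => ∑ l ∈ Finset.Icc lo hi,
        (-(((m:ℂ) - 2*(l:ℕ)))/2 * (deriv V x * T l x)) * wf V lam x ^ (m - 2*(((l+1):ℕ):ℤ))) := by
      refine ⟨fun l' => fun x => -(((m:ℂ) - 2*((l'-1:ℕ):ℕ)))/2 * (deriv V x * T (l'-1) x), ?_, ?_⟩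
      · intro l' hl'
        have hl'2 := Finset.mem_Icc.1 hl'
        have hd1 : deriv V ∈ TT V n 1 1 := by
          have h0 := mono_mem (V := V) (n := n) (L := {1}) (by intro m hm; simp at hm; omega)
          have h1 : mono V {1} = deriv V := by funext x; simp [mono, iteratedDeriv_one]
          rw [h1] at h0; simpa using h0
        have hmem : (fun x => deriv V x * T (l'-1) x) ∈ TT V n l' (r+1) := by
          refine TT_mul' hd1 (hT (l'-1) (Finset.mem_Icc.2 ⟨by omega, by omega⟩)) (by omega) (by omega)
        exact Submodule.smul_mem _ (-(((m:ℂ) - 2*((l'-1:ℕ):ℕ)))/2) hmem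
      · intro x
        rw [show Finset.Icc (lo+1) (hi+1) = (Finset.Icc lo hi).map (addRightEmbedding 1) from
          (Finset.map_add_right_Icc lo hi 1).symm, Finset.sum_map]
        apply Finset.sum_congr rfl
        intro l _
        simp only [addRightEmbedding_apply]
        norm_num
    exact h2.mono_range (by omega) le_rfl

end Rep
end Stmt1
end Part3
section Part4
namespace Stmt1

def qf (lam : ℂ) (psi : ℤ → ℝ → ℂ) (k : ℤ) : ℝ → ℂ := fun x => lam ^ (-(k:ℂ)/2) * psi k x

variable {V : ℝ → ℂ} {n : ℕ} {lam : ℂ} {psi : ℤ → ℝ → ℂ}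

lemma lampow (hlam0 : lam ≠ 0) (a b c : ℂ) (h : a + b = c) : lam ^ a * lam ^ b = lam ^ c := by
  rw [← Complex.cpow_add _ _ hlam0, h]

lemma psi_eq (hlam0 : lam ≠ 0) (k : ℤ) (x : ℝ) :
    psi k x = lam ^ ((k:ℂ)/2) * qf lam psi k x := by
  rw [qf, ← mul_assoc, lampow hlam0 _ _ 0 (by ring), Complex.cpow_zero, one_mul]

lemma q_top (hpsi : PsiSystem n V lam psi) (k : ℤ) (hk : (n:ℤ) ≤ k) :
    qf lam psi k = fun _ => 0 := by
  funext x
  simp [qf, hpsi.1 k (Or.inl hk)]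

lemma derivV_mem (hn : 1 ≤ n) : deriv V ∈ TT V n 1 1 := by
  have h0 := mono_mem (V := V) (n := n) (L := {1}) (by intro m hm; simp at hm; omega)
  have h1 : mono V {1} = deriv V := by funext x; simp [mono, iteratedDeriv_one]
  rw [h1] at h0; simpa using h0

lemma q_neg1 (hlam : lam ∈ Complex.slitPlane) (hpsi : PsiSystem n V lam psi) :
    qf lam psi (-1) = fun x => Complex.I * wf V lam x := by
  have hlam0 : lam ≠ 0 := Complex.slitPlane_ne_zero hlam
  funext x
  rw [qf, hpsi.2.1 x, wf]
  have he : (-(((-1):ℤ):ℂ)/2) = (1:ℂ)/2 := by push_cast; ring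
  rw [he]
  have : lam ^ ((1:ℂ)/2) * (Complex.I * lam ^ (-(1/2):ℂ) * (lam - V x) ^ ((1/2):ℂ))
      = Complex.I * (lam ^ ((1:ℂ)/2) * lam ^ (-(1/2):ℂ)) * (lam - V x) ^ ((1/2):ℂ) := by ring
  rw [this, lampow hlam0 _ _ 0 (by ring), Complex.cpow_zero]
  norm_num

lemma q_rec (hlam : lam ∈ Complex.slitPlane)
    (hlamV : ∀ x : ℝ, lam - V x ∈ Complex.slitPlane)
    (hpsi : PsiSystem n V lam psi) (k : ℤ) (hk0 : 0 ≤ k) (hkn : k ≤ (n:ℤ) - 1) (x : ℝ) :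
    qf lam psi k x = 1/(2*Complex.I) * ((wf V lam x)⁻¹ *
      (deriv (qf lam psi (k-1)) x -
        ∑ a ∈ Finset.Icc (0:ℤ) (k-1), qf lam psi a x * qf lam psi (k-1-a) x)) := by
  have hlam0 : lam ≠ 0 := Complex.slitPlane_ne_zero hlam
  have hrec := hpsi.2.2 (k-1) (by omega) (by omega) x
  rw [show k-1+1 = k by ring] at hrec
  have hderiv : deriv (psi (k-1)) x = lam ^ (((k-1:ℤ):ℂ)/2) * deriv (qf lam psi (k-1)) x := by
    have hfn : psi (k-1) = fun y => lam ^ (((k-1:ℤ):ℂ)/2) * qf lam psi (k-1) y :=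
      funext (fun y => psi_eq hlam0 (k-1) y)
    rw [hfn, deriv_const_mul_field]
  have hsum : ∀ a ∈ Finset.Icc (0:ℤ) (k-1), psi a x * psi (k-1-a) x
      = lam ^ (((k-1:ℤ):ℂ)/2) * (qf lam psi a x * qf lam psi (k-1-a) x) := by
    intro a _
    rw [psi_eq (psi := psi) hlam0 a x, psi_eq (psi := psi) hlam0 (k-1-a) x,
      show lam ^ ((a:ℂ)/2) * qf lam psi a x * (lam ^ (((k-1-a:ℤ):ℂ)/2) * qf lam psi (k-1-a) x)
        = (lam ^ ((a:ℂ)/2) * lam ^ ((((k-1-a:ℤ)):ℂ)/2)) * (qf lam psi a x * qf lam psi (k-1-a) x)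
        from by push_cast; ring,
      lampow hlam0 _ _ (((k-1:ℤ):ℂ)/2) (by push_cast; ring)]
  rw [qf, hrec, hderiv, Finset.sum_congr rfl hsum, ← Finset.mul_sum, ← mul_sub, hpsi.2.1 x]
  rw [show (lam - V x) ^ ((1/2):ℂ) = wf V lam x from rfl]
  have hI : Complex.I ≠ 0 := Complex.I_ne_zero
  have hwx : wf V lam x ≠ 0 := hw0 hlamV x
  have hp1 : lam ^ (-(1/2):ℂ) = (lam ^ ((1:ℂ)/2))⁻¹ := by
    rw [show (-(1/2):ℂ) = -((1:ℂ)/2) by norm_num, Complex.cpow_neg]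
  have hp0 : lam ^ ((1:ℂ)/2) ≠ 0 := by
    simp only [ne_eq, Complex.cpow_eq_zero_iff, not_and_or, not_ne_iff]
    exact Or.inl hlam0
  rw [hp1]
  have key2 : lam ^ (-(k:ℂ)/2) * (lam ^ ((1:ℂ)/2) * lam ^ (((k:ℂ) - 1)/2)) = 1 := by
    rw [lampow hlam0 ((1:ℂ)/2) (((k:ℂ)-1)/2) ((k:ℂ)/2) (by ring),
      lampow hlam0 _ _ 0 (by ring), Complex.cpow_zero]
  have key3 : lam ^ (-((k:ℂ)/2)) * lam ^ ((1:ℂ)/2) * lam ^ (((k-1:ℤ):ℂ)/2) = 1 := by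
    rw [show (-((k:ℂ)/2)) = -(k:ℂ)/2 by ring, show (((k-1:ℤ):ℂ)/2) = ((k:ℂ)-1)/2 by push_cast; ring,
      mul_assoc, key2]
  field_simp
  linear_combination (deriv (qf lam psi (k-1)) x -
    ∑ i ∈ Finset.Icc 0 (k-1), qf lam psi i x * qf lam psi (k-1-i) x) * key3
end Stmt1
end Part4
section Part5
namespace Stmt1
variable {V : ℝ → ℂ} {n : ℕ} {lam : ℂ} {psi : ℤ → ℝ → ℂ}

lemma Rep.cast {r r' lo lo' hi hi' : ℕ} {m m' : ℤ} {f : ℝ → ℂ} (h : Rep V n lam r lo hi m f)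
    (hr : r = r') (hlo : lo = lo') (hhi : hi = hi') (hm : m = m') :
    Rep V n lam r' lo' hi' m' f := by
  subst hr hlo hhi hm; exact h

lemma Rep.sub {r lo hi : ℕ} {m : ℤ} {f g : ℝ → ℂ} (h₁ : Rep V n lam r lo hi m f)
    (h₂ : Rep V n lam r lo hi m g) : Rep V n lam r lo hi m (fun x => f x - g x) :=
  (h₁.add (Rep.cmul (-1) h₂)).congr' (fun x => by ring)

lemma q_rep (hV : ContDiff ℝ (n+1) V) (hlam : lam ∈ Complex.slitPlane)
    (hlamV : ∀ x : ℝ, lam - V x ∈ Complex.slitPlane) (hpsi : PsiSystem n V lam psi) :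
    ∀ k : ℕ, (k:ℤ) ≤ (n:ℤ) - 1 → Rep V n lam (k+1) 1 (k+1) (-(k:ℤ)) (qf lam psi k) := by
  intro k
  induction k using Nat.strong_induction_on with
  | _ k IH =>
  intro hk
  have hn1 : 1 ≤ n := by omega
  have hlam0 : lam ≠ 0 := Complex.slitPlane_ne_zero hlam
  have hrec := q_rec hlam hlamV hpsi (k:ℤ) (by omega) hk
  rcases Nat.eq_zero_or_pos k with rfl | hkpos
  · -- base case k = 0
    have hq0 : ∀ x, qf lam psi 0 x = (-(1:ℂ)/4) * deriv V x * wf V lam x ^ (-2:ℤ) := by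
      intro x
      have h := hrec x
      rw [show (((0:ℕ):ℤ)) = (0:ℤ) from rfl] at h
      rw [show (0:ℤ)-1 = -1 from rfl] at h
      rw [q_neg1 hlam hpsi] at h
      have hd : deriv (fun y => Complex.I * wf V lam y) x
          = Complex.I * (-(deriv V x)/(2 * wf V lam x)) := by
        rw [deriv_const_mul_field, (hasDerivAt_wf hV hlamV x).deriv]
      rw [hd] at h
      rw [Finset.Icc_eq_empty (by norm_num), Finset.sum_empty] at h
      rw [h]
      have hwx : wf V lam x ≠ 0 := hw0 hlamV x
      have hw2 : wf V lam x ^ (-2:ℤ) = ((wf V lam x) * (wf V lam x))⁻¹ := by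
        rw [zpow_neg, show ((2:ℤ)) = ((2:ℕ):ℤ) from rfl, zpow_natCast, pow_two]
      rw [hw2]
      have hI : Complex.I ≠ 0 := Complex.I_ne_zero
      field_simp
      ring
    refine Rep.congr' ?_ (fun x => (hq0 x).symm)
    refine ⟨fun _ => fun x => (-(1:ℂ)/4) * deriv V x, ?_, ?_⟩
    · intro l hl
      have hl1 : l = 1 := by simp only [Finset.mem_Icc] at hl; omega
      subst hl1
      exact Submodule.smul_mem _ (-(1:ℂ)/4) (derivV_mem hn1)
    · intro x
      rw [show (0+1 : ℕ) = 1 from rfl, Finset.Icc_self, Finset.sum_singleton]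
      norm_num
  · -- step case
    have e1 : ((k:ℤ) - 1) = (((k - 1 : ℕ)) : ℤ) := by omega
    have RepA2 : Rep V n lam ((k-1)+1) 1 ((k-1)+1) (-((k:ℤ)-1)) (qf lam psi ((k:ℤ)-1)) := by
      rw [e1]
      exact IH (k-1) (by omega) (by omega)
    have RepD := (Rep.deriv' hV hlamV hn1 RepA2 (by omega)).2
    have RepS : Rep V n lam ((k-1)+2) 1 ((k-1)+1+1) (-((k:ℤ)-1))
        (fun x => ∑ a ∈ Finset.Icc (0:ℤ) ((k:ℤ)-1),
          qf lam psi a x * qf lam psi ((k:ℤ)-1-a) x) := by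
      apply Rep.sum
      intro a ha
      rw [Finset.mem_Icc] at ha
      have ea : a = ((a.toNat : ℕ) : ℤ) := (Int.toNat_of_nonneg ha.1).symm
      have eb : (k:ℤ)-1-a = ((((k:ℤ)-1-a).toNat : ℕ) : ℤ) :=
        (Int.toNat_of_nonneg (by omega)).symm
      have h1 := IH a.toNat (by omega) (by omega)
      have h2 := IH ((k:ℤ)-1-a).toNat (by omega) (by omega)
      have h3 := Rep.mul hlamV h1 h2
      refine Rep.congr' (Rep.cast (h3.mono_range (by omega) le_rfl)
        (by omega) rfl (by omega) (by omega)) (fun x => ?_)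
      rw [← ea, ← eb]
    have RepB := Rep.sub RepD RepS
    have RepC := Rep.winv hlamV RepB
    have RepE := Rep.cmul (1/(2*Complex.I)) RepC
    exact Rep.congr' (Rep.cast RepE (by omega) rfl (by omega) (by omega))
      (fun x => (hrec x).symm)

end Stmt1
end Part5
section Part6
namespace Stmt1
variable {V : ℝ → ℂ} {n : ℕ} {lam : ℂ} {psi : ℤ → ℝ → ℂ}

lemma q_deriv_zero (hpsi : PsiSystem n V lam psi) (k : ℤ) (hk : (n:ℤ) ≤ k) :
    deriv (qf lam psi k) = fun _ => (0:ℂ) := by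
  rw [q_top hpsi k hk]
  funext x
  exact deriv_const x 0

/-- the filtered product sum -/
def SS (lam : ℂ) (psi : ℤ → ℝ → ℂ) (n : ℕ) (k : ℤ) : ℝ → ℂ := fun x =>
  ∑ a ∈ (Finset.Icc (-1:ℤ) (k+1)).filter
      (fun a => 0 ≤ a ∧ a ≤ (n:ℤ)-1 ∧ k - a ≤ (n:ℤ)-1),
    qf lam psi a x * qf lam psi (k-a) x

lemma remainder_eq (hlam : lam ∈ Complex.slitPlane) (hpsi : PsiSystem n V lam psi)
    (hn1 : 1 ≤ n) (x : ℝ) :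
    remainder n lam psi x = deriv (qf lam psi ((n:ℤ)-1)) x -
      ∑ j ∈ Finset.range n, SS lam psi n ((n:ℤ)-1+j) x := by
  have hlam0 : lam ≠ 0 := Complex.slitPlane_ne_zero hlam
  have hmax : max ((n:ℤ)-1) (2*((n:ℤ)-1)) = 2*((n:ℤ)-1) := max_eq_right (by omega)
  have hI1 : ∀ k : ℤ, lam ^ (-(k:ℂ)/2) *
      (deriv (psi k) x - ∑ a ∈ Finset.Icc (-1:ℤ) (k+1), psi a x * psi (k-a) x)
      = deriv (qf lam psi k) x -
        ∑ a ∈ Finset.Icc (-1:ℤ) (k+1), qf lam psi a x * qf lam psi (k-a) x := by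
    intro k
    rw [mul_sub]
    congr 1
    · rw [show qf lam psi k = fun y => lam ^ (-(k:ℂ)/2) * psi k y from rfl,
        deriv_const_mul_field]
    · rw [Finset.mul_sum]
      apply Finset.sum_congr rfl
      intro a _
      rw [psi_eq (psi := psi) hlam0 a x, psi_eq (psi := psi) hlam0 (k-a) x,
        show lam ^ (-(k:ℂ)/2) * (lam ^ ((a:ℂ)/2) * qf lam psi a x *
            (lam ^ (((k-a:ℤ):ℂ)/2) * qf lam psi (k-a) x))
          = (lam ^ (-(k:ℂ)/2) * (lam ^ ((a:ℂ)/2) * lam ^ (((k-a:ℤ):ℂ)/2))) *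
            (qf lam psi a x * qf lam psi (k-a) x) from by ring,
        lampow hlam0 _ _ ((k:ℂ)/2) (by push_cast; ring),
        lampow hlam0 _ _ 0 (by push_cast; ring), Complex.cpow_zero, one_mul]
  have hsum1 : remainder n lam psi x =
      ∑ k ∈ Finset.Icc ((n:ℤ)-1) (2*((n:ℤ)-1)),
        (deriv (qf lam psi k) x -
          ∑ a ∈ Finset.Icc (-1:ℤ) (k+1), qf lam psi a x * qf lam psi (k-a) x) := by
    rw [remainder, hmax]
    exact Finset.sum_congr rfl (fun k _ => hI1 k)
  rw [hsum1, Finset.sum_sub_distrib]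
  congr 1
  · -- only k = n-1 survives
    apply Finset.sum_eq_single_of_mem ((n:ℤ)-1) (Finset.mem_Icc.2 ⟨le_refl _, by omega⟩)
    intro k hk hne
    rw [Finset.mem_Icc] at hk
    rw [q_deriv_zero hpsi k (by omega)]
  · -- filter & reindex
    have hfil : ∀ k ∈ Finset.Icc ((n:ℤ)-1) (2*((n:ℤ)-1)),
        ∑ a ∈ Finset.Icc (-1:ℤ) (k+1), qf lam psi a x * qf lam psi (k-a) x
          = SS lam psi n k x := by
      intro k hk
      rw [Finset.mem_Icc] at hk
      rw [SS]
      apply (Finset.sum_filter_of_ne ?_).symm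
      intro a ha hne
      rw [Finset.mem_Icc] at ha
      refine ⟨?_, ?_, ?_⟩
      · by_contra h
        apply hne
        rw [show k - a = k + 1 by omega, congrFun (q_top hpsi (k+1) (by omega)) x, mul_zero]
      · by_contra h
        apply hne
        rw [congrFun (q_top hpsi a (by omega)) x, zero_mul]
      · by_contra h
        apply hne
        rw [congrFun (q_top hpsi (k-a) (by omega)) x, mul_zero]
    rw [Finset.sum_congr rfl hfil]
    -- reindex Icc (n-1) (2(n-1)) ↔ range n
    apply Finset.sum_bij' (i := fun (k : ℤ) (_ : k ∈ _) => (k - ((n:ℤ)-1)).toNat)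
      (j := fun (j : ℕ) (_ : j ∈ Finset.range n) => (n:ℤ)-1+j)
    · intro k hk
      rw [Finset.mem_Icc] at hk
      simp only [Finset.mem_range]
      omega
    · intro j hj
      rw [Finset.mem_range] at hj
      rw [Finset.mem_Icc]
      omega
    · intro k hk
      rw [Finset.mem_Icc] at hk
      omega
    · intro j hj
      omega
    · intro k hk
      rw [Finset.mem_Icc] at hk
      congr 1
      omega

end Stmt1
end Part6
section Part7
namespace Stmt1
variable {V : ℝ → ℂ} {n : ℕ} {lam : ℂ} {psi : ℤ → ℝ → ℂ}

lemma SS_rep (hV : ContDiff ℝ (n+1) V) (hlam : lam ∈ Complex.slitPlane)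
    (hlamV : ∀ x : ℝ, lam - V x ∈ Complex.slitPlane) (hpsi : PsiSystem n V lam psi)
    (j : ℕ) (hj : j < n) :
    Rep V n lam (n+1+j) 2 (n+1+j) (-((n:ℤ)-1+j)) (SS lam psi n ((n:ℤ)-1+j)) := by
  show Rep V n lam (n+1+j) 2 (n+1+j) (-((n:ℤ)-1+j)) (fun x =>
    ∑ a ∈ (Finset.Icc (-1:ℤ) (((n:ℤ)-1+j)+1)).filter
        (fun a => 0 ≤ a ∧ a ≤ (n:ℤ)-1 ∧ ((n:ℤ)-1+j) - a ≤ (n:ℤ)-1),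
      qf lam psi a x * qf lam psi (((n:ℤ)-1+j)-a) x)
  apply Rep.sum
  intro a ha
  simp only [Finset.mem_filter, Finset.mem_Icc] at ha
  obtain ⟨⟨ha1, ha2⟩, ha0, han, hbn⟩ := ha
  have ea : a = ((a.toNat : ℕ) : ℤ) := (Int.toNat_of_nonneg ha0).symm
  have eb : ((n:ℤ)-1+j) - a = (((((n:ℤ)-1+j)-a).toNat : ℕ) : ℤ) :=
    (Int.toNat_of_nonneg (by omega)).symm
  have h1 := q_rep hV hlam hlamV hpsi a.toNat (by omega)
  have h2 := q_rep hV hlam hlamV hpsi (((n:ℤ)-1+j)-a).toNat (by omega)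
  have h3 := Rep.mul hlamV h1 h2
  refine Rep.congr' (Rep.cast h3 (by omega) (by omega) (by omega) (by omega)) (fun x => ?_)
  rw [← ea, ← eb]

lemma main_pos (hV : ContDiff ℝ (n+1) V) (hlam : lam ∈ Complex.slitPlane)
    (hlamV : ∀ x : ℝ, lam - V x ∈ Complex.slitPlane) (hpsi : PsiSystem n V lam psi)
    (hn1 : 1 ≤ n) :
    ∃ C > (0 : ℝ), ∃ T : ℕ → ℕ → ℝ → ℂ,
      (∀ k < n, ∀ l : ℕ, 2 ≤ l → l ≤ n + 1 + k → IsTType V l (n + 1 + k) n (T k l)) ∧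
      ∀ x : ℝ, ‖remainder n lam psi x‖ ≤
        C * (‖iteratedDeriv (n + 1) V x‖ /
              ‖lam - V x‖ ^ (((n : ℝ) + 1) / 2) +
          ∑ k ∈ Finset.range n,
            (1 / ‖lam - V x‖ ^ (((n : ℝ) - 1 + (k : ℝ)) / 2)) *
              ∑ l ∈ Finset.Icc 2 (n + 1 + k),
                ‖T k l x‖ / ‖lam - V x‖ ^ (l : ℕ)) := by
  have hlam0 : lam ≠ 0 := Complex.slitPlane_ne_zero hlam
  obtain ⟨T0, hT0mem, hT0eq⟩ := q_rep hV hlam hlamV hpsi (n-1) (by omega)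
  obtain ⟨c₀, hc₀⟩ := tt_one (hT0mem 1 (Finset.mem_Icc.2 ⟨le_refl 1, by omega⟩))
  rw [show (n-1)+1 = n by omega] at hc₀
  -- the lower-order part of q_{n-1}
  set gfun : ℝ → ℂ := fun x => ∑ l ∈ Finset.Icc 2 ((n-1)+1),
    T0 l x * wf V lam x ^ (-((n-1:ℕ):ℤ) - 2*(l:ℤ)) with hgfun
  have hsplit : ∀ x, qf lam psi ((n-1:ℕ):ℤ) x
      = T0 1 x * wf V lam x ^ (-((n-1:ℕ):ℤ) - 2) + gfun x := by
    intro x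
    rw [hT0eq x,
      show Finset.Icc 1 ((n-1)+1) = insert 1 (Finset.Icc 2 ((n-1)+1)) from by
        ext a; simp only [Finset.mem_Icc, Finset.mem_insert]; omega,
      Finset.sum_insert (by simp [Finset.mem_Icc])]
    norm_num [hgfun]
  have hgrep : Rep V n lam n 2 ((n-1)+1) (-((n-1:ℕ):ℤ)) gfun := by
    refine ⟨T0, fun l hl => ?_, fun x => rfl⟩
    have hl2 := Finset.mem_Icc.1 hl
    exact TT_congr (hT0mem l (Finset.mem_Icc.2 ⟨by omega, hl2.2⟩)) rfl (by omega)
  have hgd := Rep.deriv' hV hlamV hn1 hgrep (by omega)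
  have hc₀' : T0 1 = fun y => c₀ * iteratedDeriv n V y := funext hc₀
  -- the middle junk function
  set midf : ℝ → ℂ := fun x => T0 1 x * ((((-((n-1:ℕ):ℤ)-2):ℤ):ℂ) *
    wf V lam x ^ ((-((n-1:ℕ):ℤ)-2)-1) * (-(deriv V x)/(2*wf V lam x))) with hmidf
  have htopD : ∀ x, HasDerivAt (fun y => T0 1 y * wf V lam y ^ (-((n-1:ℕ):ℤ) - 2))
      (c₀ * iteratedDeriv (n+1) V x * wf V lam x ^ (-((n-1:ℕ):ℤ)-2) + midf x) x := by
    intro x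
    have h1 : HasDerivAt (T0 1) (c₀ * iteratedDeriv (n+1) V x) x := by
      rw [hc₀', iteratedDeriv_succ]
      exact ((diff_iter hV le_rfl) x).hasDerivAt.const_mul c₀
    exact h1.mul (hasDerivAt_wfz hV hlamV _ x)
  have hmid : Rep V n lam (n+1) 2 ((n-1)+1+1) (-((n-1:ℕ):ℤ)) midf := by
    have base : Rep V n lam (n+1) 2 2 (-((n-1:ℕ):ℤ)) midf := by
      refine ⟨fun _ => fun x => (-((((-((n-1:ℕ):ℤ)-2):ℤ):ℂ))/2) * (deriv V x * T0 1 x),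
        ?_, ?_⟩
      · intro l hl
        have hl2 : l = 2 := by simp only [Finset.mem_Icc] at hl; omega
        subst hl2
        apply Submodule.smul_mem
        exact TT_mul' (derivV_mem hn1)
          (TT_congr (hT0mem 1 (Finset.mem_Icc.2 ⟨le_refl 1, by omega⟩)) rfl
            (show (n-1)+1 = n by omega))
          rfl (by omega)
      · intro x
        rw [Finset.Icc_self, Finset.sum_singleton, hmidf]
        have hwx := hw0 hlamV x
        rw [show (-((n-1:ℕ):ℤ) - 2*((2:ℕ):ℤ)) = ((-((n-1:ℕ):ℤ)-2)-1) + (-1) by push_cast; ring,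
          zpow_add₀ hwx, zpow_neg_one]
        field_simp
    exact base.mono_range le_rfl (by omega)
  have hrest : Rep V n lam (n+1) 2 ((n-1)+1+1) (-((n-1:ℕ):ℤ))
      (fun x => midf x + deriv gfun x) := Rep.add hmid hgd.2
  have hqderiv : ∀ x, deriv (qf lam psi ((n-1:ℕ):ℤ)) x
      = c₀ * iteratedDeriv (n+1) V x * wf V lam x ^ (-((n-1:ℕ):ℤ)-2)
        + (midf x + deriv gfun x) := by
    intro x
    have hfn : qf lam psi ((n-1:ℕ):ℤ)
        = fun y => (fun z => T0 1 z * wf V lam z ^ (-((n-1:ℕ):ℤ) - 2)) y + gfun y :=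
      funext hsplit
    rw [hfn, deriv_fun_add ((htopD x).differentiableAt) ((hgd.1 x)), (htopD x).deriv]
    ring
  -- the grouped functions
  set G : ℕ → ℝ → ℂ := fun j => if j = 0 then
      (fun x => (midf x + deriv gfun x) - SS lam psi n ((n:ℤ)-1) x)
    else (fun x => -SS lam psi n (((n:ℤ)-1)+j) x) with hG
  have hGrep : ∀ j < n, Rep V n lam (n+1+j) 2 (n+1+j) (-(((n:ℤ)-1)+j)) (G j) := by
    intro j hj
    by_cases hj0 : j = 0
    · subst hj0
      simp only [hG, if_pos rfl]
      have hS := SS_rep hV hlam hlamV hpsi 0 (by omega)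
      have hS2 : Rep V n lam (n+1+0) 2 (n+1+0) (-(((n:ℤ)-1)+((0:ℕ):ℤ)))
          (fun x => SS lam psi n ((n:ℤ)-1) x) := by
        refine hS.congr' (fun x => ?_)
        norm_num
      have hr' : Rep V n lam (n+1+0) 2 (n+1+0) (-(((n:ℤ)-1)+((0:ℕ):ℤ)))
          (fun x => midf x + deriv gfun x) :=
        hrest.cast (by omega) rfl (by omega) (by omega)
      exact (Rep.sub hr' hS2).congr' (fun x => rfl)
    · simp only [hG, if_neg hj0]
      exact (Rep.cmul (-1) (SS_rep hV hlam hlamV hpsi j hj)).congr' (fun x => by ring)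
  have hremid : ∀ x, remainder n lam psi x
      = c₀ * iteratedDeriv (n+1) V x * wf V lam x ^ (-((n-1:ℕ):ℤ)-2)
        + ∑ j ∈ Finset.range n, G j x := by
    intro x
    rw [remainder_eq hlam hpsi hn1 x,
      show deriv (qf lam psi ((n:ℤ)-1)) x = deriv (qf lam psi ((n-1:ℕ):ℤ)) x from by
        rw [show ((n:ℤ)-1) = ((n-1:ℕ):ℤ) by omega],
      hqderiv x]
    have h0mem : (0:ℕ) ∈ Finset.range n := by simp only [Finset.mem_range]; omega
    have hGsum : ∑ j ∈ Finset.range n, G j x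
        = (midf x + deriv gfun x) - ∑ j ∈ Finset.range n, SS lam psi n (((n:ℤ)-1)+j) x := by
      rw [← Finset.insert_erase h0mem, Finset.sum_insert (Finset.notMem_erase _ _),
        Finset.sum_insert (Finset.notMem_erase _ _)]
      have he : ∑ j ∈ (Finset.range n).erase 0, G j x
          = -∑ j ∈ (Finset.range n).erase 0, SS lam psi n (((n:ℤ)-1)+j) x := by
        rw [← Finset.sum_neg_distrib]
        apply Finset.sum_congr rfl
        intro j hj
        simp only [hG, if_neg (Finset.mem_erase.1 hj).1]
      rw [he]
      simp only [hG, if_pos rfl]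
      push_cast
      ring
    rw [hGsum]
    ring
  -- extract the coefficient functions
  have hex : ∀ j : ℕ, ∃ Tj : ℕ → ℝ → ℂ, j < n →
      ((∀ l ∈ Finset.Icc 2 (n+1+j), Tj l ∈ TT V n l (n+1+j)) ∧
        ∀ x, G j x = ∑ l ∈ Finset.Icc 2 (n+1+j),
          Tj l x * wf V lam x ^ (-(((n:ℤ)-1)+j) - 2*(l:ℤ))) := by
    intro j
    by_cases hj : j < n
    · obtain ⟨Tj, h1, h2⟩ := hGrep j hj
      exact ⟨Tj, fun _ => ⟨h1, h2⟩⟩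
    · exact ⟨fun _ _ => 0, fun h => absurd h hj⟩
  choose Tf hTf using hex
  have habsW : ∀ x (e : ℤ), ‖wf V lam x ^ e‖
      = ‖lam - V x‖ ^ ((e:ℝ)/2) := by
    intro x e
    rw [norm_zpow, wf, Complex.norm_cpow_of_ne_zero (hu0 hlamV x)]
    have h1 : ((1:ℂ)/2).im = 0 := by norm_num
    have h2 : ((1:ℂ)/2).re = 1/2 := by norm_num
    rw [h1, h2, mul_zero, Real.exp_zero, div_one, ← Real.rpow_intCast
      (‖lam - V x‖ ^ ((1:ℝ)/2)) e, ← Real.rpow_mul (norm_nonneg _)]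
    congr 1
    ring
  refine ⟨‖c₀‖ + 1, by positivity, Tf, ?_, ?_⟩
  · intro k hk l hl2 hln
    exact tt_isTType ((hTf k hk).1 l (Finset.mem_Icc.2 ⟨hl2, hln⟩))
  · intro x
    have hup : 0 < ‖lam - V x‖ := norm_pos_iff.mpr (hu0 hlamV x)
    set A : ℝ := ‖iteratedDeriv (n + 1) V x‖ /
      ‖lam - V x‖ ^ (((n : ℝ) + 1) / 2) with hA
    set B : ℝ := ∑ k ∈ Finset.range n,
      (1 / ‖lam - V x‖ ^ (((n : ℝ) - 1 + (k : ℝ)) / 2)) *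
        ∑ l ∈ Finset.Icc 2 (n + 1 + k),
          ‖Tf k l x‖ / ‖lam - V x‖ ^ (l : ℕ) with hB
    have hAnn : 0 ≤ A := by positivity
    have hBnn : 0 ≤ B := by
      apply Finset.sum_nonneg
      intro k _
      apply mul_nonneg (by positivity)
      apply Finset.sum_nonneg
      intro l _
      positivity
    have htopabs : ‖c₀ * iteratedDeriv (n+1) V x *
        wf V lam x ^ (-((n-1:ℕ):ℤ)-2)‖ = ‖c₀‖ * A := by
      rw [norm_mul, norm_mul, habsW x, hA]
      rw [show (((-((n-1:ℕ):ℤ)-2):ℤ):ℝ)/2 = -(((n:ℝ)+1)/2) by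
          push_cast [Nat.cast_sub hn1]; ring,
        Real.rpow_neg hup.le, div_eq_mul_inv]
      ring
    have hsumabs : ‖∑ j ∈ Finset.range n, G j x‖ ≤ B := by
      refine le_trans (norm_sum_le _ _) ?_
      rw [hB]
      apply Finset.sum_le_sum
      intro j hj
      have hjn : j < n := Finset.mem_range.1 hj
      rw [(hTf j hjn).2 x]
      refine le_trans (norm_sum_le _ _) ?_
      rw [Finset.mul_sum]
      apply Finset.sum_le_sum
      intro l _
      rw [norm_mul, habsW x]
      rw [show (((-(((n:ℤ)-1)+j) - 2*(l:ℤ)):ℤ):ℝ)/2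
          = (-(((n:ℝ) - 1 + (j:ℝ))/2)) + (-(l:ℝ)) by push_cast; ring,
        Real.rpow_add hup, Real.rpow_neg hup.le, Real.rpow_neg hup.le, Real.rpow_natCast]
      rw [one_div, div_eq_mul_inv]
      calc ‖Tf j l x‖ * ((‖lam - V x‖ ^ (((n:ℝ)-1+(j:ℝ))/2))⁻¹ *
            (‖lam - V x‖ ^ (l:ℕ))⁻¹)
          = (‖lam - V x‖ ^ (((n:ℝ)-1+(j:ℝ))/2))⁻¹ *
            (‖Tf j l x‖ * (‖lam - V x‖ ^ (l:ℕ))⁻¹) := by ring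
        _ ≤ _ := le_refl _
    calc ‖remainder n lam psi x‖
        ≤ ‖c₀ * iteratedDeriv (n+1) V x *
            wf V lam x ^ (-((n-1:ℕ):ℤ)-2)‖ + ‖∑ j ∈ Finset.range n, G j x‖ := by
          rw [hremid x]; exact norm_add_le _ _
      _ ≤ ‖c₀‖ * A + B := by rw [htopabs]; exact add_le_add_right hsumabs _
      _ ≤ (‖c₀‖ + 1) * (A + B) := by nlinarith [norm_nonneg c₀]

end Stmt1
end Part7

end


open Stmt1
/-- Lemma 2.2 of the paper. Pointwise estimate of the remainder
`r_n`: `|r_n| ≲ |V^{(n+1)}|/|λ-V|^{(n+1)/2} + Σ_{k=0}^{n-1} |λ-V|^{-(n-1+k)/2}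
Σ_{l=2}^{n+1+k} |T_l^{n+1+k,n}|/|λ-V|^l` for suitable functions of type `T`, with an
implicit constant independent of `λ` and `x`. -/
theorem statement_1 (n : ℕ) (V : ℝ → ℂ) (lam : ℂ) (psi : ℤ → ℝ → ℂ)
    (hV : ContDiff ℝ (n + 1) V)
    (hlam : lam ∈ Complex.slitPlane)
    (hlamV : ∀ x : ℝ, lam - V x ∈ Complex.slitPlane)
    (hpsi : PsiSystem n V lam psi) :
    ∃ C > (0 : ℝ), ∃ T : ℕ → ℕ → ℝ → ℂ,
      (∀ k < n, ∀ l : ℕ, 2 ≤ l → l ≤ n + 1 + k → IsTType V l (n + 1 + k) n (T k l)) ∧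
      ∀ x : ℝ, ‖remainder n lam psi x‖ ≤
        C * (‖iteratedDeriv (n + 1) V x‖ /
              ‖lam - V x‖ ^ (((n : ℝ) + 1) / 2) +
          ∑ k ∈ Finset.range n,
            (1 / ‖lam - V x‖ ^ (((n : ℝ) - 1 + (k : ℝ)) / 2)) *
              ∑ l ∈ Finset.Icc 2 (n + 1 + k),
                ‖T k l x‖ / ‖lam - V x‖ ^ (l : ℕ)) := by

  have hlam0 : lam ≠ 0 := Complex.slitPlane_ne_zero hlam
  rcases Nat.eq_zero_or_pos n with rfl | hn1
  · -- n = 0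
    refine ⟨1, one_pos, fun _ _ => fun _ => 0, fun k hk => absurd hk (Nat.not_lt_zero k), ?_⟩
    intro x
    simp only [Finset.range_zero, Finset.sum_empty, add_zero, one_mul]
    have hrem : remainder 0 lam psi x = lam ^ (-((-1:ℤ):ℂ)/2) *
        (deriv (psi (-1)) x - ∑ a ∈ Finset.Icc (-1:ℤ) 0, psi a x * psi (-1-a) x) := by
      rw [remainder]
      rw [show max (((0:ℕ):ℤ)-1) (2*(((0:ℕ):ℤ)-1)) = -1 by norm_num,
        show ((0:ℕ):ℤ)-1 = -1 from by norm_num, Finset.Icc_self, Finset.sum_singleton]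
      norm_num
    have hzero : ∑ a ∈ Finset.Icc (-1:ℤ) 0, psi a x * psi (-1-a) x = 0 := by
      apply Finset.sum_eq_zero
      intro a ha
      rw [Finset.mem_Icc] at ha
      have : a = -1 ∨ a = 0 := by omega
      rcases this with rfl | rfl
      · rw [show (-1:ℤ)-(-1) = 0 by norm_num, hpsi.1 0 (Or.inl (by norm_num))]
        simp
      · rw [hpsi.1 0 (Or.inl (by norm_num))]
        simp
    have hfn : psi (-1) = fun y => (Complex.I * lam ^ (-(1/2):ℂ)) * wf V lam y :=
      funext (fun y => by rw [hpsi.2.1 y]; simp only [wf])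
    have hd : deriv (psi (-1)) x
        = (Complex.I * lam ^ (-(1/2):ℂ)) * (-(deriv V x)/(2 * wf V lam x)) := by
      rw [hfn, deriv_const_mul_field, (hasDerivAt_wf hV hlamV x).deriv]
    rw [hrem, hzero, sub_zero, hd, show (-((-1:ℤ):ℂ)/2) = (1:ℂ)/2 by norm_num,
      show lam ^ ((1:ℂ)/2) * (Complex.I * lam ^ (-(1/2):ℂ) * (-(deriv V x)/(2 * wf V lam x)))
        = (lam ^ ((1:ℂ)/2) * lam ^ (-(1/2):ℂ)) * (Complex.I * (-(deriv V x)/(2 * wf V lam x)))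
        from by ring,
      lampow hlam0 _ _ 0 (by ring), Complex.cpow_zero, one_mul]
    have hup : 0 < ‖lam - V x‖ := norm_pos_iff.mpr (hu0 hlamV x)
    have habsw : ‖wf V lam x‖ = ‖lam - V x‖ ^ ((1:ℝ)/2) := by
      simp only [wf]
      rw [Complex.norm_cpow_of_ne_zero (hu0 hlamV x),
        show ((1:ℂ)/2).im = 0 by norm_num, show ((1:ℂ)/2).re = 1/2 by norm_num,
        mul_zero, Real.exp_zero, div_one]
    rw [norm_mul, norm_div, norm_mul, norm_neg, Complex.norm_I, one_mul,
      Complex.norm_two, habsw, iteratedDeriv_one]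
    rw [show (((0:ℕ):ℝ)+1)/2 = (1:ℝ)/2 by norm_num]
    rw [div_le_div_iff₀ (by positivity) (by positivity)]
    have h1 : 0 ≤ ‖deriv V x‖ := norm_nonneg _
    have h2 : 0 < ‖lam - V x‖ ^ ((1:ℝ)/2) := by positivity
    nlinarith
  · exact main_pos hV hlam hlamV hpsi hn1
end

section
/- Let V satisfy Assumption A and be unbounded at +∞ (respectively at -∞). Then there exists λ₀ > 0 such that for all λ > λ₀ the number δ_+ := inf{δ ≥ 0 : |Im V(δ)|²/⟨δ⟩^{4ν_+ + 2ε₁ + 2} = λ} (respectively δ_-) is finite, and δ_± → +∞ as λ → +∞. -/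
open Complex Filter Asymptotics MeasureTheory Real Set intervalIntegral
open scoped Classical ENNReal Topology

section AuxStatement2

lemma jb_pos (x : ℝ) : 0 < jb x := Real.sqrt_pos.mpr (by positivity)

lemma one_le_jb (x : ℝ) : 1 ≤ jb x := by
  rw [show (1:ℝ) = Real.sqrt 1 by simp [Real.sqrt_one]]
  exact Real.sqrt_le_sqrt (by nlinarith [sq_nonneg x])

lemma jb_neg (x : ℝ) : jb (-x) = jb x := by simp [jb]

lemma continuous_jb : Continuous jb :=
  (continuous_const.add (continuous_pow 2)).sqrt

lemma continuous_Ffun (W : ℝ → ℂ) (p : ℝ) (hW : Continuous W) :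
    Continuous (fun d => ((W d).im) ^ 2 / jb d ^ p) := by
  refine Continuous.div ((Complex.continuous_im.comp hW).pow 2)
    (continuous_jb.rpow_const fun x => Or.inl (jb_pos x).ne') ?_
  exact fun x => (Real.rpow_pos_of_pos (jb_pos x) p).ne'

/-- On any side, the big assumption plus unboundedness gives that
`F d = (Im W d)² / ⟨d⟩^(4ν+2ε₁+2)` is frequently large at `+∞`. -/
lemma freq_large (W : ℝ → ℂ) (nu eps1 : ℝ) (heps : 0 < eps1)
    (hbig : (fun x => jb x ^ (4 * (nu + eps1) + 2) * (jb x ^ (4 * nu + 2) + |(W x).re|))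
      =O[atTop] (fun x => ((W x).im) ^ 2))
    (hub : ¬ ∃ C : ℝ, ∀ᶠ x in atTop, ‖W x‖ ≤ C) :
    ∀ M : ℝ, ∃ᶠ d in atTop, M < ((W d).im) ^ 2 / jb d ^ (4 * nu + 2 * eps1 + 2) := by
  intro M
  obtain ⟨C, hC, hbd⟩ := hbig.exists_pos
  have hbd' := hbd.bound
  set C' : ℝ := max C (Real.sqrt C) with hC'def
  have hC' : 0 < C' := lt_of_lt_of_le hC (le_max_left _ _)
  have hev : ∀ᶠ x in atTop,
      ‖W x‖ ≤ 2 * C' * (((W x).im) ^ 2 / jb x ^ (4 * nu + 2 * eps1 + 2)) := by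
    filter_upwards [hbd'] with x hx
    set J := jb x with hJdef
    have hJ1 : 1 ≤ J := one_le_jb x
    have hJ0 : 0 < J := jb_pos x
    set a : ℝ := 4 * (nu + eps1) + 2
    set b : ℝ := 4 * nu + 2
    set p : ℝ := 4 * nu + 2 * eps1 + 2
    set I : ℝ := (W x).im
    set R : ℝ := (W x).re
    have hJa : 0 < J ^ a := Real.rpow_pos_of_pos hJ0 a
    have hJb : 0 < J ^ b := Real.rpow_pos_of_pos hJ0 b
    have hJp : 0 < J ^ p := Real.rpow_pos_of_pos hJ0 p
    have hx' : J ^ a * (J ^ b + |R|) ≤ C * I ^ 2 := by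
      have h1 : ‖J ^ a * (J ^ b + |R|)‖ = J ^ a * (J ^ b + |R|) := by
        rw [Real.norm_eq_abs, _root_.abs_of_nonneg]; positivity
      have h2 : ‖I ^ 2‖ = I ^ 2 := by
        rw [Real.norm_eq_abs, _root_.abs_of_nonneg]; positivity
      rw [h1, h2] at hx; exact hx
    -- step 1 : (J^p)^2 ≤ C * I^2
    have step1 : (J ^ p) ^ 2 ≤ C * I ^ 2 := by
      have e1 : (J ^ p) ^ 2 = J ^ a * J ^ b := by
        rw [← Real.rpow_add hJ0, sq, ← Real.rpow_add hJ0]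
        congr 1; simp only [a, b, p]; ring
      rw [e1]
      calc J ^ a * J ^ b ≤ J ^ a * (J ^ b + |R|) :=
            mul_le_mul_of_nonneg_left (le_add_of_nonneg_right (abs_nonneg _)) hJa.le
        _ ≤ C * I ^ 2 := hx'
    -- step 2 : J^p ≤ √C * |I|
    have step2 : J ^ p ≤ Real.sqrt C * |I| := by
      have h2 : (J ^ p) ^ 2 ≤ (Real.sqrt C * |I|) ^ 2 := by
        rw [mul_pow, Real.sq_sqrt hC.le, _root_.sq_abs]; exact step1
      exact le_of_pow_le_pow_left₀ two_ne_zero (by positivity) h2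
    -- step 3 : |I| ≤ √C * (I^2 / J^p)
    have step3 : |I| ≤ Real.sqrt C * (I ^ 2 / J ^ p) := by
      rw [mul_div_assoc', le_div_iff₀ hJp]
      calc |I| * J ^ p ≤ |I| * (Real.sqrt C * |I|) :=
            mul_le_mul_of_nonneg_left step2 (abs_nonneg _)
        _ = Real.sqrt C * I ^ 2 := by rw [← _root_.sq_abs]; ring
    -- step 4 : |R| ≤ C * (I^2 / J^p)
    have step4 : |R| ≤ C * (I ^ 2 / J ^ p) := by
      rw [mul_div_assoc', le_div_iff₀ hJp]
      have hpa : J ^ p ≤ J ^ a :=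
        Real.rpow_le_rpow_of_exponent_le hJ1 (by simp only [a, p]; linarith)
      calc |R| * J ^ p ≤ |R| * J ^ a :=
            mul_le_mul_of_nonneg_left hpa (abs_nonneg _)
        _ = J ^ a * |R| := by ring
        _ ≤ J ^ a * (J ^ b + |R|) :=
            mul_le_mul_of_nonneg_left (le_add_of_nonneg_left hJb.le) hJa.le
        _ ≤ C * I ^ 2 := hx'
    have hFnn : 0 ≤ I ^ 2 / J ^ p := by positivity
    calc ‖W x‖ ≤ |R| + |I| := Complex.norm_le_abs_re_add_abs_im _
      _ ≤ C * (I ^ 2 / J ^ p) + Real.sqrt C * (I ^ 2 / J ^ p) := add_le_add step4 step3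
      _ ≤ C' * (I ^ 2 / J ^ p) + C' * (I ^ 2 / J ^ p) := by
          gcongr
          · exact le_max_left _ _
          · exact le_max_right _ _
      _ = 2 * C' * (I ^ 2 / J ^ p) := by ring
  have hfr : ∃ᶠ x in atTop, ¬ ‖W x‖ ≤ 2 * C' * (|M| + 1) := by
    rw [← Filter.not_eventually]
    exact fun h => hub ⟨_, h⟩
  refine (hfr.and_eventually hev).mono ?_
  rintro x ⟨hx1, hx2⟩
  push_neg at hx1
  have h3 : 2 * C' * (|M| + 1) <
      2 * C' * (((W x).im) ^ 2 / jb x ^ (4 * nu + 2 * eps1 + 2)) :=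
    lt_of_lt_of_le hx1 hx2
  have h4 : |M| + 1 < ((W x).im) ^ 2 / jb x ^ (4 * nu + 2 * eps1 + 2) :=
    (mul_lt_mul_iff_right₀ (by positivity)).mp h3
  have := le_abs_self M
  linarith

/-- Main abstract lemma: a continuous function frequently large at `+∞` hits every
large level on `[0,∞)`, and the first hitting point tends to `+∞`. -/
lemma key_main (F : ℝ → ℝ) (hF : Continuous F)
    (hfreq : ∀ M : ℝ, ∃ᶠ d in atTop, M < F d) :
    (∃ lam0 > (0 : ℝ), ∀ lam > lam0, {d : ℝ | 0 ≤ d ∧ F d = lam}.Nonempty) ∧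
    Tendsto (fun lam => sInf {d : ℝ | 0 ≤ d ∧ F d = lam}) atTop atTop := by
  have hne : ∀ lam > max (F 0) 1, {d : ℝ | 0 ≤ d ∧ F d = lam}.Nonempty := by
    intro lam hlam
    obtain ⟨x, hxF, hx0⟩ := ((hfreq lam).and_eventually (eventually_ge_atTop 0)).exists
    have hmem : lam ∈ Set.Icc (F 0) (F x) :=
      ⟨le_trans (le_max_left _ _) hlam.le, hxF.le⟩
    obtain ⟨d, hd, hFd⟩ := intermediate_value_Icc hx0 hF.continuousOn hmem
    exact ⟨d, hd.1, hFd⟩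
  constructor
  · exact ⟨max (F 0) 1, lt_of_lt_of_le one_pos (le_max_right _ _), hne⟩
  · rw [tendsto_atTop]
    intro M
    obtain ⟨K, hK⟩ := (isCompact_Icc (a := (0:ℝ)) (b := max M 0)).exists_bound_of_continuousOn
      hF.continuousOn
    filter_upwards [eventually_gt_atTop (max (max (F 0) 1) K)] with lam hlam
    have hlam1 : lam > max (F 0) 1 := lt_of_le_of_lt (le_max_left _ _) hlam
    have hlamK : K < lam := lt_of_le_of_lt (le_max_right _ _) hlam
    refine le_csInf (hne lam hlam1) ?_
    intro d hd
    by_contra h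
    push_neg at h
    have hdIcc : d ∈ Set.Icc (0:ℝ) (max M 0) := ⟨hd.1, le_max_of_le_left h.le⟩
    have h1 : F d ≤ K := (le_abs_self _).trans ((Real.norm_eq_abs _) ▸ hK d hdIcc)
    rw [hd.2] at h1
    linarith

end AuxStatement2

/-- (Remark 3.3 i) of the paper). If `V` satisfies Assumption A and
is unbounded at `+∞` (resp. `-∞`), then for all sufficiently large `λ > 0` the
defining set of `δ_+` (resp. `δ_-`) is nonempty (i.e. `δ_±` is finite), and
`δ_± → +∞` as `λ → +∞`. -/
theorem statement_2 (N : ℕ) (V : ℝ → ℂ) (nuM nuP eps1 eps2 : ℝ)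
    (hA : AssumptionA N V nuM nuP eps1 eps2) :
    (¬ BoundedAt V atTop →
      (∃ lam0 > (0 : ℝ), ∀ lam > lam0, (deltaSetP V nuP eps1 lam).Nonempty) ∧
      Tendsto (deltaP V nuP eps1 eps2) atTop atTop) ∧
    (¬ BoundedAt V atBot →
      (∃ lam0 > (0 : ℝ), ∀ lam > lam0, (deltaSetM V nuM eps1 lam).Nonempty) ∧
      Tendsto (deltaM V nuM eps1 eps2) atTop atTop) := by
  constructor
  · intro hub
    have hFcont := continuous_Ffun V (4 * nuP + 2 * eps1 + 2) hA.smooth.continuous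
    have hfreq := freq_large V nuP eps1 hA.eps1_pos (hA.big_p hub) hub
    have hmain := key_main _ hFcont hfreq
    refine ⟨hmain.1, ?_⟩
    have hdel : deltaP V nuP eps1 eps2 = fun lam => sInf (deltaSetP V nuP eps1 lam) := by
      funext lam; simp [deltaP, hub]
    rw [hdel]
    exact hmain.2
  · intro hub
    set W : ℝ → ℂ := fun d => V (-d) with hW
    have hWcont : Continuous W := hA.smooth.continuous.comp continuous_neg
    have hbigW : (fun x => jb x ^ (4 * (nuM + eps1) + 2) * (jb x ^ (4 * nuM + 2) + |(W x).re|))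
        =O[atTop] (fun x => ((W x).im) ^ 2) := by
      have h := (hA.big_m hub).comp_tendsto tendsto_neg_atTop_atBot
      simpa [Function.comp_def, jb_neg] using h
    have hubW : ¬ ∃ C : ℝ, ∀ᶠ x in atTop, ‖W x‖ ≤ C := by
      rintro ⟨C, hC⟩
      exact hub (show BoundedAt V atBot from
        ⟨C, by simpa [hW] using tendsto_neg_atBot_atTop.eventually hC⟩)
    have hFcont := continuous_Ffun W (4 * nuM + 2 * eps1 + 2) hWcont
    have hfreq := freq_large W nuM eps1 hA.eps1_pos hbigW hubW
    have hmain := key_main _ hFcont hfreq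
    refine ⟨hmain.1, ?_⟩
    have hdel : deltaM V nuM eps1 eps2 = fun lam => sInf (deltaSetM V nuM eps1 lam) := by
      funext lam; simp [deltaM, hub]
    rw [hdel]
    exact hmain.2
end

section
/- Let V be complex-valued with sufficiently many locally square-integrable derivatives, λ ∈ ℂ∖(-∞,0] with λ - V(x) ∈ ℂ∖(-∞,0) for all x, and ψ_{-1}' := i λ^{-1/2}(λ - V)^{1/2} (principal branch). Then for every m ∈ ℕ₀: (1) ψ_{-1}^{(m+1)} = (λ^{-1/2}/(λ-V)^{-1/2}) Σ_{j=0}^{m} T_j^{m,m+1-j}/(λ-V)^j for some functions T_j^{m,m+1-j} of type T; (2) (1/ψ_{-1}')^{(m)} = (λ^{1/2}/(λ-V)^{1/2}) Σ_{j=0}^{m} T_j^{m,m+1-j}/(λ-V)^j for some functions T_j^{m,m+1-j} of type T. -/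
open Complex Filter Asymptotics MeasureTheory Real Set intervalIntegral
open scoped Classical ENNReal Topology

section Aux19

/-- Evaluation of one term `(c, L)` as `c * Π_{k∈L} V^{(k)}(x)`. -/
noncomputable def TTev (V : ℝ → ℂ) (p : ℂ × List ℕ) (x : ℝ) : ℂ :=
  p.1 * ((p.2.map (fun k => iteratedDeriv k V x)).prod)

/-- Alternative list-based representation of T-type functions. -/
def TT (V : ℝ → ℂ) (j r s : ℕ) (f : ℝ → ℂ) : Prop :=
  ∃ ts : List (ℂ × List ℕ),
    (∀ p ∈ ts, (∀ k ∈ p.2, 1 ≤ k ∧ k ≤ s) ∧ p.2.sum = r ∧ p.2.length = j) ∧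
    ∀ x, f x = (ts.map (fun p => TTev V p x)).sum

lemma TTev_sum_mul (V : ℝ → ℂ) (a : ℂ) (x : ℝ) (g : ℂ × List ℕ → ℂ) :
    ∀ ts : List (ℂ × List ℕ),
      (ts.map (fun p => a * g p)).sum = a * (ts.map g).sum := by
  intro ts
  induction ts with
  | nil => simp
  | cons q ts ih => simp [ih, mul_add]

lemma TT_congr {V f g} {j r s : ℕ} (h : TT V j r s f) (hfg : ∀ x, g x = f x) :
    TT V j r s g := by
  obtain ⟨ts, h1, h2⟩ := h
  exact ⟨ts, h1, fun x => (hfg x).trans (h2 x)⟩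

lemma TT_zero (V : ℝ → ℂ) (j r s : ℕ) : TT V j r s (fun _ => 0) :=
  ⟨[], by simp, fun x => by simp⟩

lemma TT_single (V : ℝ → ℂ) (c : ℂ) (L : List ℕ) {s : ℕ} (hL : ∀ k ∈ L, 1 ≤ k ∧ k ≤ s) :
    TT V L.length L.sum s (fun x => c * (L.map (fun k => iteratedDeriv k V x)).prod) := by
  refine ⟨[(c, L)], ?_, fun x => by simp [TTev]⟩
  intro p hp
  rw [List.mem_singleton] at hp
  subst hp
  exact ⟨hL, rfl, rfl⟩

lemma TT_add {V f g} {j r s : ℕ} (hf : TT V j r s f) (hg : TT V j r s g) :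
    TT V j r s (fun x => f x + g x) := by
  obtain ⟨ts, h1, h2⟩ := hf
  obtain ⟨ts', h1', h2'⟩ := hg
  refine ⟨ts ++ ts', ?_, fun x => by simp [h2 x, h2' x]⟩
  intro p hp
  rcases List.mem_append.1 hp with h | h
  · exact h1 p h
  · exact h1' p h

lemma TT_smul {V f} {j r s : ℕ} (a : ℂ) (hf : TT V j r s f) :
    TT V j r s (fun x => a * f x) := by
  obtain ⟨ts, h1, h2⟩ := hf
  refine ⟨ts.map (fun p => (a * p.1, p.2)), ?_, fun x => ?_⟩
  · intro p hp
    obtain ⟨q, hq, rfl⟩ := List.mem_map.1 hp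
    exact h1 q hq
  · show a * f x = _
    rw [h2 x, List.map_map]
    rw [show ((fun p => TTev V p x) ∘ fun p : ℂ × List ℕ => (a * p.1, p.2))
        = fun p => a * TTev V p x from funext fun p => by simp [TTev]; ring]
    exact (TTev_sum_mul V a x _ ts).symm

lemma TT_sum {V} {j r s : ℕ} {ι : Type*} (A : Finset ι) (g : ι → ℝ → ℂ)
    (h : ∀ t ∈ A, TT V j r s (g t)) : TT V j r s (fun x => ∑ t ∈ A, g t x) := by
  classical
  induction A using Finset.induction with
  | empty => simpa using TT_zero V j r s
  | insert a A hni ih =>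
    have := TT_add (h a (Finset.mem_insert_self a A))
      (ih (fun t ht => h t (Finset.mem_insert_of_mem ht)))
    exact TT_congr this (fun x => by rw [Finset.sum_insert hni])

lemma TT_mono {V f} {j r s s' : ℕ} (hss : s ≤ s') (hf : TT V j r s f) : TT V j r s' f := by
  obtain ⟨ts, h1, h2⟩ := hf
  exact ⟨ts, fun p hp => ⟨fun k hk => ⟨((h1 p hp).1 k hk).1, le_trans ((h1 p hp).1 k hk).2 hss⟩,
    (h1 p hp).2⟩, h2⟩

lemma TT_mulV {V f} {j r s : ℕ} (k : ℕ) (hk1 : 1 ≤ k) (hks : k ≤ s) (hf : TT V j r s f) :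
    TT V (j + 1) (r + k) s (fun x => iteratedDeriv k V x * f x) := by
  obtain ⟨ts, h1, h2⟩ := hf
  refine ⟨ts.map (fun p => (p.1, k :: p.2)), ?_, fun x => ?_⟩
  · intro p hp
    obtain ⟨q, hq, rfl⟩ := List.mem_map.1 hp
    obtain ⟨ha, hb, hc⟩ := h1 q hq
    refine ⟨?_, by simp [hb]; omega, by simp [hc]⟩
    intro m hm
    rcases List.mem_cons.1 hm with rfl | hm
    · exact ⟨hk1, hks⟩
    · exact ha m hm
  · show iteratedDeriv k V x * f x = _
    rw [h2 x, List.map_map]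
    rw [show ((fun p => TTev V p x) ∘ fun p : ℂ × List ℕ => (p.1, k :: p.2))
        = fun p => iteratedDeriv k V x * TTev V p x from funext fun p => by simp [TTev]; ring]
    exact (TTev_sum_mul V _ x _ ts).symm

lemma derivIter {V : ℝ → ℂ} (hV : ContDiff ℝ (⊤ : ℕ∞) V) (k : ℕ) (x : ℝ) :
    HasDerivAt (iteratedDeriv k V) (iteratedDeriv (k + 1) V x) x := by
  have h1 : Differentiable ℝ (iteratedDeriv k V) :=
    hV.differentiable_iteratedDeriv k (by exact_mod_cast lt_top_iff_ne_top.2 (by simp))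
  have := (h1 x).hasDerivAt
  rwa [iteratedDeriv_succ]

lemma prodL_hasDerivAt {V : ℝ → ℂ} (hV : ContDiff ℝ (⊤ : ℕ∞) V) (s : ℕ) :
    ∀ L : List ℕ, (∀ k ∈ L, 1 ≤ k ∧ k ≤ s) →
      ∃ g, TT V L.length (L.sum + 1) (s + 1) g ∧
        ∀ x, HasDerivAt (fun y => (L.map (fun k => iteratedDeriv k V y)).prod) (g x) x := by
  intro L
  induction L with
  | nil =>
    intro _
    exact ⟨fun _ => 0, TT_zero V 0 1 (s + 1),
      fun x => by simpa using hasDerivAt_const x (1 : ℂ)⟩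
  | cons k L ih =>
    intro hkL
    obtain ⟨g, hg, hgd⟩ := ih (fun m hm => hkL m (List.mem_cons_of_mem _ hm))
    have hk := hkL k (List.mem_cons_self)
    refine ⟨fun x => iteratedDeriv (k + 1) V x * (L.map (fun m => iteratedDeriv m V x)).prod
        + iteratedDeriv k V x * g x, ?_, ?_⟩
    · have t1 : TT V (L.length + 1) (k + 1 + L.sum) (s + 1)
          (fun x => 1 * ((((k + 1) :: L)).map (fun m => iteratedDeriv m V x)).prod) := by
        have := TT_single V 1 ((k + 1) :: L) (s := s + 1) ?_
        · simpa using this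
        · intro m hm
          rcases List.mem_cons.1 hm with rfl | hm
          · omega
          · have := hkL m (List.mem_cons_of_mem _ hm); omega
      have t1' : TT V (L.length + 1) (k + 1 + L.sum) (s + 1)
          (fun x => iteratedDeriv (k + 1) V x * (L.map (fun m => iteratedDeriv m V x)).prod) :=
        TT_congr t1 (fun x => by simp)
      have t2 : TT V (L.length + 1) (L.sum + 1 + k) (s + 1)
          (fun x => iteratedDeriv k V x * g x) :=
        TT_mulV k hk.1 (le_trans hk.2 (Nat.le_succ s)) hg
      have harith1 : (k :: L).length = L.length + 1 := by simp
      have harith2 : (k :: L).sum + 1 = k + 1 + L.sum := by simp; omega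
      rw [harith1, harith2]
      refine TT_add t1' (by rwa [show L.sum + 1 + k = k + 1 + L.sum from by omega] at t2)
    · intro x
      have h1 := (derivIter hV k x).mul (hgd x)
      simp only [List.map_cons, List.prod_cons]
      exact h1

lemma TT_hasDeriv {V : ℝ → ℂ} (hV : ContDiff ℝ (⊤ : ℕ∞) V) {f} {j r s : ℕ} (hf : TT V j r s f) :
    ∃ G, TT V j (r + 1) (s + 1) G ∧ ∀ x, HasDerivAt f (G x) x := by
  obtain ⟨ts, h1, h2⟩ := hf
  have key : ∀ ts' : List (ℂ × List ℕ),
      (∀ p ∈ ts', (∀ k ∈ p.2, 1 ≤ k ∧ k ≤ s) ∧ p.2.sum = r ∧ p.2.length = j) →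
      ∃ G, TT V j (r + 1) (s + 1) G ∧
        ∀ x, HasDerivAt (fun y => (ts'.map (fun p => TTev V p y)).sum) (G x) x := by
    intro ts'
    induction ts' with
    | nil =>
      intro _
      exact ⟨fun _ => 0, TT_zero V j (r + 1) (s + 1),
        fun x => by simpa using hasDerivAt_const x (0 : ℂ)⟩
    | cons q ts' ih =>
      intro hq
      obtain ⟨G, hG, hGd⟩ := ih (fun p hp => hq p (List.mem_cons_of_mem _ hp))
      obtain ⟨hq1, hq2, hq3⟩ := hq q (List.mem_cons_self)
      obtain ⟨g, hg, hgd⟩ := prodL_hasDerivAt hV s q.2 hq1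
      rw [hq2, hq3] at hg
      refine ⟨fun x => q.1 * g x + G x, TT_add (TT_smul q.1 hg) hG, fun x => ?_⟩
      have := ((hgd x).const_mul q.1).add (hGd x)
      simp only [TTev, List.map_cons, List.sum_cons]
      exact this
  obtain ⟨G, hG, hGd⟩ := key ts h1
  refine ⟨G, hG, fun x => ?_⟩
  have hfe : f = fun y => (ts.map (fun p => TTev V p y)).sum := funext h2
  rw [hfe]
  exact hGd x

lemma key_lemma {V : ℝ → ℂ} (hV : ContDiff ℝ (⊤ : ℕ∞) V) (lam : ℂ)
    (hlamV : ∀ x : ℝ, lam - V x ∈ Complex.slitPlane) (a C : ℂ) (m : ℕ) :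
    ∃ T : ℕ → ℝ → ℂ, (∀ j ≤ m, TT V j m (m + 1 - j) (T j)) ∧ (∀ j, m < j → T j = 0) ∧
      ∀ x : ℝ, iteratedDeriv m (fun y => C * (lam - V y) ^ a) x =
        ∑ j ∈ Finset.range (m + 1), T j x * (lam - V x) ^ (a - j) := by
  have hW : ∀ x, lam - V x ≠ 0 := fun x => Complex.slitPlane_ne_zero (hlamV x)
  induction m with
  | zero =>
    refine ⟨fun j => if j = 0 then (fun _ => C) else 0, ?_, ?_, ?_⟩
    · intro j hj
      interval_cases j
      simp only [if_pos rfl]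
      have := TT_single V C [] (s := 1) (by simp)
      exact TT_congr this (fun x => by simp)
    · intro j hj
      beta_reduce
      rw [if_neg (by omega : ¬ j = 0)]
    · intro x
      simp [iteratedDeriv_zero]
  | succ m ih =>
    obtain ⟨T, hT1, hT2, hT3⟩ := ih
    have hG : ∃ G : ℕ → ℝ → ℂ, (∀ j ≤ m, TT V j (m + 1) (m + 2 - j) (G j)) ∧
        (∀ j, m < j → G j = 0) ∧ ∀ j x, HasDerivAt (T j) (G j x) x := by
      classical
      choose G hGa hGb using fun (j : ℕ) (hj : j ≤ m) => TT_hasDeriv hV (hT1 j hj)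
      refine ⟨fun j => if hj : j ≤ m then G j hj else 0, ?_, ?_, ?_⟩
      · intro j hj
        beta_reduce
        rw [dif_pos hj]
        have := hGa j hj
        rwa [show m + 1 - j + 1 = m + 2 - j from by omega] at this
      · intro j hj; beta_reduce; rw [dif_neg (by omega : ¬ j ≤ m)]
      · intro j x
        beta_reduce
        by_cases hj : j ≤ m
        · rw [dif_pos hj]; exact hGb j hj x
        · rw [dif_neg hj, hT2 j (by omega)]
          simpa using hasDerivAt_const x (0 : ℂ)
    obtain ⟨G, hG1, hG2, hG3⟩ := hG
    set dV : ℝ → ℂ := fun x => iteratedDeriv 1 V x with hdV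
    refine ⟨fun j => if j ≤ m + 1 then
        (fun x => G j x + (if j = 0 then 0 else ((j : ℂ) - 1 - a) * dV x * T (j - 1) x))
        else 0, ?_, ?_, ?_⟩
    · intro j hj
      beta_reduce
      rw [if_pos hj]
      have hGj : TT V j (m + 1) (m + 2 - j) (G j) := by
        rcases Nat.lt_or_ge j (m + 1) with h | h
        · exact hG1 j (by omega)
        · have : j = m + 1 := by omega
          subst this
          rw [hG2 (m + 1) (by omega)]
          exact TT_zero V (m + 1) (m + 1) (m + 2 - (m + 1))
      have hsnd : TT V j (m + 1) (m + 2 - j)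
          (fun x => if j = 0 then 0 else ((j : ℂ) - 1 - a) * dV x * T (j - 1) x) := by
        by_cases hj0 : j = 0
        · subst hj0
          exact TT_congr (TT_zero V 0 (m + 1) (m + 2)) (fun x => by simp)
        · have hTj : TT V (j - 1) m (m + 1 - (j - 1)) (T (j - 1)) := hT1 (j - 1) (by omega)
          rw [show m + 1 - (j - 1) = m + 2 - j from by omega] at hTj
          have h2 := TT_mulV 1 le_rfl (by omega) hTj
          rw [show j - 1 + 1 = j from by omega, show m + 1 = m + 1 from rfl] at h2
          have h3 := TT_smul ((j : ℂ) - 1 - a) h2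
          exact TT_congr h3 (fun x => by rw [if_neg hj0]; simp only [hdV]; ring)
      have hfin := TT_add hGj hsnd
      rw [show m + 1 + 1 - j = m + 2 - j from by omega]
      exact TT_congr hfin (fun x => rfl)
    · intro j hj; beta_reduce; rw [if_neg (by omega : ¬ j ≤ m + 1)]
    · intro x
      rw [iteratedDeriv_succ]
      have hfeq : iteratedDeriv m (fun y => C * (lam - V y) ^ a) =
          fun y => ∑ j ∈ Finset.range (m + 1), T j y * (lam - V y) ^ (a - j) := funext hT3
      rw [hfeq]
      have hVd : HasDerivAt (fun y => lam - V y) (-(dV x)) x := by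
        have h0 := ((hV.differentiable (by simp)) x).hasDerivAt
        have h2 := (hasDerivAt_const x lam).sub h0
        simp only [hdV, iteratedDeriv_one]
        exact h2.congr_deriv (zero_sub _)
      have hterm : ∀ j ∈ Finset.range (m + 1),
          HasDerivAt (fun y => T j y * (lam - V y) ^ (a - j))
            (G j x * (lam - V x) ^ (a - j) +
              T j x * ((a - j) * (lam - V x) ^ (a - j - 1) * (-(dV x)))) x := by
        intro j _
        have hg := (Complex.hasStrictDerivAt_cpow_const (c := a - (j : ℂ)) (hlamV x)).hasDerivAt
        have hcomp := HasFDerivAt.comp_hasDerivAt x (hg.hasFDerivAt.restrictScalars ℝ) hVd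
        have hmul := (hG3 j x).mul hcomp
        refine hmul.congr_deriv ?_
        simp only [ContinuousLinearMap.coe_restrictScalars', Function.comp_apply,
          ContinuousLinearMap.toSpanSingleton_apply, smul_eq_mul]
        ring
      have hsum := HasDerivAt.fun_sum hterm
      rw [hsum.deriv]
      rw [Finset.sum_add_distrib]
      have e1 : ∑ j ∈ Finset.range (m + 1 + 1),
          (if j ≤ m + 1 then (fun x => G j x +
            (if j = 0 then 0 else ((j : ℂ) - 1 - a) * dV x * T (j - 1) x)) else 0) x *
            (lam - V x) ^ (a - j)
          = ∑ j ∈ Finset.range (m + 1 + 1), (G j x * (lam - V x) ^ (a - j)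
            + (if j = 0 then 0 else ((j : ℂ) - 1 - a) * dV x * T (j - 1) x) *
              (lam - V x) ^ (a - j)) := by
        refine Finset.sum_congr rfl (fun j hj => ?_)
        rw [if_pos (by simp at hj; omega : j ≤ m + 1)]
        ring
      rw [e1, Finset.sum_add_distrib]
      congr 1
      · conv_rhs => rw [Finset.sum_range_succ]
        rw [hG2 (m + 1) (by omega)]
        simp
      · rw [Finset.sum_range_succ' (fun j => (if j = 0 then 0 else
            ((j : ℂ) - 1 - a) * dV x * T (j - 1) x) * (lam - V x) ^ (a - (j : ℕ))) (m + 1)]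
        simp only [Nat.succ_ne_zero, if_false, reduceIte, Nat.add_sub_cancel, zero_mul,
          add_zero]
        refine Finset.sum_congr rfl (fun j hj => ?_)
        have hexp : a - ((j : ℕ) + 1 : ℕ) = a - j - 1 := by push_cast; ring
        rw [hexp]
        push_cast
        ring

lemma isTType_congr {V f g} {j r s : ℕ} (h : IsTType V j r s f) (hfg : ∀ x, g x = f x) :
    IsTType V j r s g := by
  obtain ⟨A, c, h1, h2⟩ := h
  exact ⟨A, c, h1, fun x => (hfg x).trans (h2 x)⟩

lemma isTType_zero (V : ℝ → ℂ) (j r s : ℕ) : IsTType V j r s (fun _ => 0) :=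
  ⟨∅, fun _ => 0, by simp, fun x => by simp⟩

lemma isTType_add {V f g} {j r s : ℕ} (hf : IsTType V j r s f) (hg : IsTType V j r s g) :
    IsTType V j r s (fun x => f x + g x) := by
  classical
  obtain ⟨A, c, hA, hfx⟩ := hf
  obtain ⟨B, d, hB, hgx⟩ := hg
  refine ⟨A ∪ B, fun α => (if α ∈ A then c α else 0) + (if α ∈ B then d α else 0), ?_, ?_⟩
  · intro α hα
    rcases Finset.mem_union.1 hα with h | h
    exacts [hA α h, hB α h]
  · intro x
    have e : ∀ (S : Finset (Fin s → ℕ)) (u : (Fin s → ℕ) → ℂ), S ⊆ A ∪ B →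
        ∑ α ∈ A ∪ B, (if α ∈ S then u α else 0) *
          ∏ i : Fin s, (iteratedDeriv ((i : ℕ) + 1) V x) ^ (α i)
        = ∑ α ∈ S, u α * ∏ i : Fin s, (iteratedDeriv ((i : ℕ) + 1) V x) ^ (α i) := by
      intro S u hS
      simp only [ite_mul, zero_mul]
      rw [Finset.sum_ite_mem, Finset.inter_eq_right.mpr hS]
    show f x + g x = _
    beta_reduce
    rw [hfx x, hgx x, ← e A c Finset.subset_union_left, ← e B d Finset.subset_union_right,
      ← Finset.sum_add_distrib]
    exact Finset.sum_congr rfl fun α _ => by ring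

lemma count_sum_mul (s : ℕ) (L : List ℕ) (hL : ∀ k ∈ L, 1 ≤ k ∧ k ≤ s) :
    ∑ i : Fin s, ((i : ℕ) + 1) * L.count ((i : ℕ) + 1) = L.sum := by
  induction L with
  | nil => simp
  | cons k L ih =>
    have hk := hL k (List.mem_cons_self)
    have ih' := ih (fun m hm => hL m (List.mem_cons_of_mem _ hm))
    have i0 : Fin s := ⟨k - 1, by omega⟩
    have hcount : ∀ i : Fin s, (k :: L).count ((i : ℕ) + 1)
        = L.count ((i : ℕ) + 1) + if i = (⟨k - 1, by omega⟩ : Fin s) then 1 else 0 := by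
      intro i
      simp only [List.count_cons, beq_iff_eq]
      congr 1
      by_cases h : k = (i : ℕ) + 1
      · rw [if_pos h, if_pos (by apply Fin.ext; simp; omega)]
      · rw [if_neg h, if_neg (fun he => h (by rw [he]; simp; omega))]
    simp only [hcount, Nat.mul_add, Finset.sum_add_distrib, ih']
    rw [List.sum_cons]
    have : ∑ i : Fin s, ((i : ℕ) + 1) * (if i = (⟨k - 1, by omega⟩ : Fin s) then 1 else 0)
        = k := by
      simp only [mul_ite, mul_one, mul_zero]
      rw [Finset.sum_ite_eq' Finset.univ (⟨k - 1, by omega⟩ : Fin s) (fun i => (i : ℕ) + 1)]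
      simp
      omega
    omega

lemma count_sum (s : ℕ) (L : List ℕ) (hL : ∀ k ∈ L, 1 ≤ k ∧ k ≤ s) :
    ∑ i : Fin s, L.count ((i : ℕ) + 1) = L.length := by
  induction L with
  | nil => simp
  | cons k L ih =>
    have hk := hL k (List.mem_cons_self)
    have ih' := ih (fun m hm => hL m (List.mem_cons_of_mem _ hm))
    have hcount : ∀ i : Fin s, (k :: L).count ((i : ℕ) + 1)
        = L.count ((i : ℕ) + 1) + if i = (⟨k - 1, by omega⟩ : Fin s) then 1 else 0 := by
      intro i
      simp only [List.count_cons, beq_iff_eq]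
      congr 1
      by_cases h : k = (i : ℕ) + 1
      · rw [if_pos h, if_pos (by apply Fin.ext; simp; omega)]
      · rw [if_neg h, if_neg (fun he => h (by rw [he]; simp; omega))]
    simp only [hcount, Finset.sum_add_distrib, ih']
    rw [Finset.sum_ite_eq' Finset.univ (⟨k - 1, by omega⟩ : Fin s) (fun _ => 1)]
    simp

lemma count_prod (s : ℕ) (L : List ℕ) (hL : ∀ k ∈ L, 1 ≤ k ∧ k ≤ s) (z : ℕ → ℂ) :
    ∏ i : Fin s, z ((i : ℕ) + 1) ^ (L.count ((i : ℕ) + 1)) = (L.map z).prod := by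
  induction L with
  | nil => simp
  | cons k L ih =>
    have hk := hL k (List.mem_cons_self)
    have ih' := ih (fun m hm => hL m (List.mem_cons_of_mem _ hm))
    have hcount : ∀ i : Fin s, (k :: L).count ((i : ℕ) + 1)
        = L.count ((i : ℕ) + 1) + if i = (⟨k - 1, by omega⟩ : Fin s) then 1 else 0 := by
      intro i
      simp only [List.count_cons, beq_iff_eq]
      congr 1
      by_cases h : k = (i : ℕ) + 1
      · rw [if_pos h, if_pos (by apply Fin.ext; simp; omega)]
      · rw [if_neg h, if_neg (fun he => h (by rw [he]; simp; omega))]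
    simp only [hcount, pow_add, Finset.prod_mul_distrib, ih']
    rw [List.map_cons, List.prod_cons]
    have : ∏ i : Fin s, z ((i : ℕ) + 1) ^ (if i = (⟨k - 1, by omega⟩ : Fin s) then 1 else 0)
        = z k := by
      have he : ∀ i : Fin s, z ((i : ℕ) + 1) ^ (if i = (⟨k - 1, by omega⟩ : Fin s) then 1 else 0)
          = if i = (⟨k - 1, by omega⟩ : Fin s) then z k else 1 := by
        intro i
        by_cases h : i = (⟨k - 1, by omega⟩ : Fin s)
        · rw [if_pos h, if_pos h, h]
          simp
          congr 1
          omega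
        · rw [if_neg h, if_neg h, pow_zero]
      rw [Finset.prod_congr rfl (fun i _ => he i)]
      rw [Finset.prod_ite_eq' Finset.univ (⟨k - 1, by omega⟩ : Fin s) (fun _ => z k)]
      simp
    rw [this]
    ring

lemma isTType_single {V : ℝ → ℂ} {s : ℕ} (c : ℂ) (L : List ℕ)
    (hL : ∀ k ∈ L, 1 ≤ k ∧ k ≤ s) :
    IsTType V (L.length) (L.sum) s (fun x => c * (L.map (fun k => iteratedDeriv k V x)).prod) := by
  refine ⟨{fun i : Fin s => L.count ((i : ℕ) + 1)}, fun _ => c, ?_, ?_⟩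
  · intro α hα
    rw [Finset.mem_singleton] at hα
    subst hα
    exact ⟨count_sum_mul s L hL, count_sum s L hL⟩
  · intro x
    show c * (L.map (fun k => iteratedDeriv k V x)).prod = _
    rw [Finset.sum_singleton, ← count_prod s L hL (fun k => iteratedDeriv k V x)]

lemma TT_isTType {V f} {j r s : ℕ} (h : TT V j r s f) : IsTType V j r s f := by
  obtain ⟨ts, h1, h2⟩ := h
  have key : ∀ ts' : List (ℂ × List ℕ),
      (∀ p ∈ ts', (∀ k ∈ p.2, 1 ≤ k ∧ k ≤ s) ∧ p.2.sum = r ∧ p.2.length = j) →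
      IsTType V j r s (fun x => (ts'.map (fun p => TTev V p x)).sum) := by
    intro ts'
    induction ts' with
    | nil =>
      intro _
      exact isTType_congr (isTType_zero V j r s) (fun x => by simp)
    | cons q ts' ih =>
      intro hq
      obtain ⟨hq1, hq2, hq3⟩ := hq q (List.mem_cons_self)
      have hsing := isTType_single (V := V) q.1 q.2 hq1
      rw [hq2, hq3] at hsing
      have := isTType_add hsing (ih (fun p hp => hq p (List.mem_cons_of_mem _ hp)))
      exact isTType_congr this (fun x => by simp [TTev])
  exact isTType_congr (key ts h1) h2


end Aux19

/-- Lemma A.2 of the paper. Structure of the derivatives of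
`ψ_{-1}' = iλ^{-1/2}(λ-V)^{1/2}` and of `1/ψ_{-1}'`: for every `m ∈ ℕ₀`,
`ψ_{-1}^{(m+1)} = (λ^{-1/2}/(λ-V)^{-1/2}) Σ_{j=0}^m T_j^{m,m+1-j}/(λ-V)^j` and
`(1/ψ_{-1}')^{(m)} = (λ^{1/2}/(λ-V)^{1/2}) Σ_{j=0}^m T_j^{m,m+1-j}/(λ-V)^j`. -/
theorem statement_19 (V : ℝ → ℂ) (lam : ℂ) (hV : ContDiff ℝ (⊤ : ℕ∞) V)
    (hlam : lam ∈ Complex.slitPlane)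
    (hlamV : ∀ x : ℝ, lam - V x ∈ Complex.slitPlane) (m : ℕ) :
    (∃ T : ℕ → ℝ → ℂ, (∀ j ≤ m, IsTType V j m (m + 1 - j) (T j)) ∧
      ∀ x : ℝ, iteratedDeriv m
          (fun y => Complex.I * lam ^ (-(1 / 2) : ℂ) * (lam - V y) ^ ((1 / 2) : ℂ)) x =
        lam ^ (-(1 / 2) : ℂ) / (lam - V x) ^ (-(1 / 2) : ℂ) *
          ∑ j ∈ Finset.range (m + 1), T j x / (lam - V x) ^ (j : ℕ)) ∧
    (∃ T : ℕ → ℝ → ℂ, (∀ j ≤ m, IsTType V j m (m + 1 - j) (T j)) ∧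
      ∀ x : ℝ, iteratedDeriv m
          (fun y => 1 / (Complex.I * lam ^ (-(1 / 2) : ℂ) * (lam - V y) ^ ((1 / 2) : ℂ))) x =
        lam ^ ((1 / 2) : ℂ) / (lam - V x) ^ ((1 / 2) : ℂ) *
          ∑ j ∈ Finset.range (m + 1), T j x / (lam - V x) ^ (j : ℕ)) := by
  have hW : ∀ x, lam - V x ≠ 0 := fun x => Complex.slitPlane_ne_zero (hlamV x)
  have hlam0 : lam ≠ 0 := Complex.slitPlane_ne_zero hlam
  have hlamhalf : lam ^ (-(1 / 2) : ℂ) * lam ^ ((1 / 2) : ℂ) = 1 := by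
    rw [← Complex.cpow_add _ _ hlam0, show (-(1 / 2) : ℂ) + (1 / 2) = 0 by ring,
      Complex.cpow_zero]
  have hWhalf : ∀ x, (lam - V x) ^ ((1 / 2) : ℂ) * (lam - V x) ^ (-(1 / 2) : ℂ) = 1 := by
    intro x
    rw [← Complex.cpow_add _ _ (hW x), show ((1 / 2) : ℂ) + -(1 / 2) = 0 by ring,
      Complex.cpow_zero]
  constructor
  · obtain ⟨T, hT1, hT2, hT3⟩ :=
      key_lemma hV lam hlamV ((1 / 2) : ℂ) (Complex.I * lam ^ (-(1 / 2) : ℂ)) m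
    refine ⟨fun j x => lam ^ ((1 / 2) : ℂ) * T j x, fun j hj => TT_isTType (TT_smul _ (hT1 j hj)),
      fun x => ?_⟩
    rw [show (fun y => Complex.I * lam ^ (-(1 / 2) : ℂ) * (lam - V y) ^ ((1 / 2) : ℂ)) =
      (fun y => Complex.I * lam ^ (-(1 / 2) : ℂ) * (lam - V y) ^ ((1 / 2) : ℂ)) from rfl, hT3 x]
    rw [Complex.cpow_neg (lam - V x) ((1 / 2) : ℂ), div_inv_eq_mul, Finset.mul_sum]
    refine Finset.sum_congr rfl (fun j hj => ?_)
    beta_reduce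
    rw [Complex.cpow_sub _ _ (hW x), Complex.cpow_natCast]
    calc T j x * ((lam - V x) ^ ((1 / 2) : ℂ) / (lam - V x) ^ (j : ℕ))
        = (lam ^ (-(1 / 2) : ℂ) * lam ^ ((1 / 2) : ℂ)) *
          (T j x * ((lam - V x) ^ ((1 / 2) : ℂ) / (lam - V x) ^ (j : ℕ))) := by
          rw [hlamhalf, one_mul]
      _ = lam ^ (-(1 / 2) : ℂ) * (lam - V x) ^ ((1 / 2) : ℂ) *
          (lam ^ ((1 / 2) : ℂ) * T j x / (lam - V x) ^ (j : ℕ)) := by ring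
  · obtain ⟨T, hT1, hT2, hT3⟩ :=
      key_lemma hV lam hlamV (-(1 / 2) : ℂ) ((-Complex.I) * lam ^ ((1 / 2) : ℂ)) m
    refine ⟨fun j x => lam ^ (-(1 / 2) : ℂ) * T j x,
      fun j hj => TT_isTType (TT_smul _ (hT1 j hj)), fun x => ?_⟩
    have hfun : (fun y => 1 / (Complex.I * lam ^ (-(1 / 2) : ℂ) * (lam - V y) ^ ((1 / 2) : ℂ)))
        = fun y => (-Complex.I) * lam ^ ((1 / 2) : ℂ) * (lam - V y) ^ (-(1 / 2) : ℂ) := by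
      funext y
      have hq : (Complex.I * lam ^ (-(1 / 2) : ℂ) * (lam - V y) ^ ((1 / 2) : ℂ)) *
          ((-Complex.I) * lam ^ ((1 / 2) : ℂ) * (lam - V y) ^ (-(1 / 2) : ℂ)) = 1 := by
        have e : (Complex.I * lam ^ (-(1 / 2) : ℂ) * (lam - V y) ^ ((1 / 2) : ℂ)) *
            ((-Complex.I) * lam ^ ((1 / 2) : ℂ) * (lam - V y) ^ (-(1 / 2) : ℂ))
            = (-(Complex.I * Complex.I)) * ((lam ^ (-(1 / 2) : ℂ) * lam ^ ((1 / 2) : ℂ)) *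
              ((lam - V y) ^ ((1 / 2) : ℂ) * (lam - V y) ^ (-(1 / 2) : ℂ))) := by ring
        rw [e, Complex.I_mul_I, hlamhalf, hWhalf y]
        norm_num
      rw [one_div, inv_eq_of_mul_eq_one_right hq]
    rw [hfun, hT3 x]
    rw [Finset.mul_sum]
    refine Finset.sum_congr rfl (fun j hj => ?_)
    beta_reduce
    rw [Complex.cpow_sub _ _ (hW x), Complex.cpow_natCast, Complex.cpow_neg (lam - V x)]
    calc T j x * (((lam - V x) ^ ((1 / 2) : ℂ))⁻¹ / (lam - V x) ^ (j : ℕ))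
        = (lam ^ (-(1 / 2) : ℂ) * lam ^ ((1 / 2) : ℂ)) *
          (T j x * (((lam - V x) ^ ((1 / 2) : ℂ))⁻¹ / (lam - V x) ^ (j : ℕ))) := by
          rw [hlamhalf, one_mul]
      _ = lam ^ ((1 / 2) : ℂ) / (lam - V x) ^ ((1 / 2) : ℂ) *
          (lam ^ (-(1 / 2) : ℂ) * T j x / (lam - V x) ^ (j : ℕ)) := by ring
end
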